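/- arXiv:2602.03431 — 12 statements merged into one kernel-verified Lean document; each statement's English description precedes it below -/
import Mathlib

section
/- If the determinant of A, computed as an integer matrix, is an odd number, then the center of the graph-Clifford algebra 𝒜(A) consists exactly of the scalar multiples of the identity. -/
noncomputable section

/-- The defining relations of the graph-Clifford algebra associated to a symmetric
0/1 matrix `A` with zero diagonal. -/
inductive GCRel {M : ℕ} (A : Matrix (Fin M) (Fin M) ℤ) :
    FreeAlgebra ℂ (Fin M) → FreeAlgebra ℂ (Fin M) → Prop
  | sq (k : Fin M) : GCRel A (FreeAlgebra.ι ℂ k * FreeAlgebra.ι ℂ k) 1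
  | comm (j k : Fin M) (hjk : j ≠ k) :
      GCRel A (FreeAlgebra.ι ℂ j * FreeAlgebra.ι ℂ k)
        (((-1 : ℂ) ^ (A j k)) • (FreeAlgebra.ι ℂ k * FreeAlgebra.ι ℂ j))

/-- The graph-Clifford algebra `𝒜(A)`. -/
abbrev GC {M : ℕ} (A : Matrix (Fin M) (Fin M) ℤ) := RingQuot (GCRel A)

/-- The generator `h_k` of the graph-Clifford algebra. -/
def hgen {M : ℕ} (A : Matrix (Fin M) (Fin M) ℤ) (k : Fin M) : GC A :=
  RingQuot.mkAlgHom ℂ (GCRel A) (FreeAlgebra.ι ℂ k)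

/-- The ordered product `g_S = h_{a_1} h_{a_2} ⋯ h_{a_n}` for a subset
`S = {a_1 < a_2 < ⋯ < a_n}` (with `g_∅ = 1`). -/
def gS {M : ℕ} (A : Matrix (Fin M) (Fin M) ℤ) (S : Finset (Fin M)) : GC A :=
  ((S.sort (· ≤ ·)).map (hgen A)).prod

namespace GCAux

variable {M : ℕ} (A : Matrix (Fin M) (Fin M) ℤ)

/-- Product of generators along a list. -/
def prodl (l : List (Fin M)) : GC A := (l.map (hgen A)).prod

@[simp] lemma prodl_nil : prodl A ([] : List (Fin M)) = 1 := rfl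

lemma prodl_cons (k : Fin M) (l : List (Fin M)) :
    prodl A (k :: l) = hgen A k * prodl A l := by
  simp [prodl]

lemma prodl_append (l l' : List (Fin M)) :
    prodl A (l ++ l') = prodl A l * prodl A l' := by
  simp [prodl]

lemma hgen_sq (k : Fin M) : hgen A k * hgen A k = 1 := by
  have := RingQuot.mkAlgHom_rel ℂ (GCRel.sq (A := A) k)
  simpa [hgen, map_mul] using this

lemma hgen_comm (hdiag : ∀ j, A j j = 0) (k j : Fin M) :
    hgen A k * hgen A j = ((-1 : ℂ) ^ (A k j)) • (hgen A j * hgen A k) := by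
  by_cases h : k = j
  · subst h; rw [hdiag, zpow_zero, one_smul]
  · have := RingQuot.mkAlgHom_rel ℂ (GCRel.comm (A := A) k j h)
    simpa [hgen, map_mul, map_smul] using this

/-- Moving a generator across a list product. -/
lemma hgen_mul_prodl (hdiag : ∀ j, A j j = 0) (k : Fin M) (l : List (Fin M)) :
    hgen A k * prodl A l
      = ((-1 : ℂ) ^ ((l.map (A k)).sum)) • (prodl A l * hgen A k) := by
  induction l with
  | nil => simp
  | cons j t ih =>
      rw [prodl_cons, ← mul_assoc, hgen_comm A hdiag k j, smul_mul_assoc,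
        mul_assoc, ih, mul_smul_comm, smul_smul, List.map_cons, List.sum_cons,
        zpow_add₀ (by norm_num : (-1:ℂ) ≠ 0)]
      rw [mul_assoc]

/-- Conjugating a list product by a generator. -/
lemma conj_prodl (hdiag : ∀ j, A j j = 0) (k : Fin M) (l : List (Fin M)) :
    hgen A k * prodl A l * hgen A k
      = ((-1 : ℂ) ^ ((l.map (A k)).sum)) • prodl A l := by
  rw [hgen_mul_prodl A hdiag, smul_mul_assoc, mul_assoc, hgen_sq, mul_one]

/-- Cancelling a generator against an occurrence in a list. -/
lemma cancel (hdiag : ∀ j, A j j = 0) :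
    ∀ (t : List (Fin M)) (a : Fin M), a ∈ t →
      ∃ c : ℂ, hgen A a * prodl A t = c • prodl A (t.erase a) := by
  intro t
  induction t with
  | nil => intro a ha; simp at ha
  | cons b t' ih =>
      intro a ha
      by_cases hab : a = b
      · subst hab
        refine ⟨1, ?_⟩
        rw [List.erase_cons_head, prodl_cons, ← mul_assoc, hgen_sq, one_mul, one_smul]
      · have ha' : a ∈ t' := by
          rcases List.mem_cons.mp ha with h | h
          · exact absurd h hab
          · exact h
        obtain ⟨c, hc⟩ := ih a ha'
        refine ⟨((-1 : ℂ) ^ (A a b)) * c, ?_⟩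
        rw [List.erase_cons_tail (by simpa using Ne.symm hab)]
        rw [prodl_cons, ← mul_assoc, hgen_comm A hdiag a b, smul_mul_assoc,
          mul_assoc, hc, mul_smul_comm, smul_smul, prodl_cons]

/-- A list product in which every generator occurs an even number of times is a scalar. -/
lemma prodl_scalar (hdiag : ∀ j, A j j = 0) :
    ∀ (n : ℕ) (l : List (Fin M)), l.length ≤ n →
      (∀ j, Even (l.count j)) → ∃ c : ℂ, prodl A l = c • 1 := by
  intro n
  induction n with
  | zero =>
      intro l hl _
      have : l = [] := List.eq_nil_of_length_eq_zero (Nat.le_zero.mp hl)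
      exact ⟨1, by simp [this]⟩
  | succ n ih =>
      intro l hl hcount
      match l with
      | [] => exact ⟨1, by simp⟩
      | a :: t =>
          have hat : a ∈ t := by
            have h1 : Even ((a :: t).count a) := hcount a
            have h2 : (a :: t).count a = t.count a + 1 := by simp
            by_contra hmem
            have : t.count a = 0 := List.count_eq_zero_of_not_mem hmem
            rw [h2, this] at h1
            simp at h1
          obtain ⟨c, hc⟩ := cancel A hdiag t a hat
          have hlen : (t.erase a).length ≤ n := by
            have := List.length_erase_of_mem hat
            have ht : t.length ≤ n := by simpa using Nat.succ_le_succ_iff.mp hl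
            omega
          have hcount' : ∀ j, Even ((t.erase a).count j) := by
            intro j
            by_cases hj : j = a
            · subst hj
              have h1 : Even ((j :: t).count j) := hcount j
              have h2 : (j :: t).count j = t.count j + 1 := by simp
              have h3 : (t.erase j).count j = t.count j - 1 := (List.count_erase_self (a := j) (l := t))
              have h4 : t.count j ≠ 0 := fun h0 => (List.count_eq_zero.mp h0) hat
              rw [h2] at h1
              rcases h1 with ⟨m, hm⟩
              refine ⟨m - 1, ?_⟩
              omega
            · have h1 : Even ((a :: t).count j) := hcount j
              have h2 : (a :: t).count j = t.count j := by
                simp [List.count_cons, Ne.symm hj, hj]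
              rw [List.count_erase_of_ne hj]
              rwa [h2] at h1
          obtain ⟨c', hc'⟩ := ih (t.erase a) hlen hcount'
          refine ⟨c * c', ?_⟩
          rw [prodl_cons, hc, hc', smul_smul]

/-- The set of list products. -/
def P : Set (GC A) := Set.range (prodl A)

lemma span_P : Submodule.span ℂ (P A) = ⊤ := by
  rw [eq_top_iff]
  rintro z -
  obtain ⟨x, rfl⟩ := RingQuot.mkAlgHom_surjective ℂ (GCRel A) z
  induction x using FreeAlgebra.induction with
  | grade0 r =>
      rw [AlgHom.commutes]
      have h1 : (1 : GC A) ∈ P A := ⟨[], rfl⟩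
      have : (algebraMap ℂ (GC A)) r = r • 1 := (Algebra.algebraMap_eq_smul_one r)
      rw [this]
      exact Submodule.smul_mem _ _ (Submodule.subset_span h1)
  | grade1 k =>
      exact Submodule.subset_span ⟨[k], by simp [prodl, hgen]⟩
  | mul a b ha hb =>
      rw [map_mul]
      have hmul : Submodule.span ℂ (P A) * Submodule.span ℂ (P A)
          ≤ Submodule.span ℂ (P A) := by
        rw [Submodule.span_mul_span]
        apply Submodule.span_le.mpr
        rintro x ⟨u, ⟨lu, rfl⟩, v, ⟨lv, rfl⟩, rfl⟩
        exact Submodule.subset_span ⟨lu ++ lv, prodl_append A lu lv⟩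
      exact hmul (Submodule.mul_mem_mul ha hb)
  | add a b ha hb =>
      rw [map_add]; exact Submodule.add_mem _ ha hb

/-- Conjugation by `h_k` as a linear endomorphism. -/
def Ck (k : Fin M) : Module.End ℂ (GC A) :=
  LinearMap.mulLeft ℂ (hgen A k) ∘ₗ LinearMap.mulRight ℂ (hgen A k)

lemma Ck_apply (k : Fin M) (z : GC A) : Ck A k z = hgen A k * z * hgen A k := by
  simp [Ck, LinearMap.mulLeft_apply, LinearMap.mulRight_apply, mul_assoc]

/-- The averaging factor `½(1 + C_k)`. -/
def Fk (k : Fin M) : Module.End ℂ (GC A) := (2⁻¹ : ℂ) • (1 + Ck A k)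

lemma Fk_apply (k : Fin M) (z : GC A) :
    Fk A k z = (2⁻¹ : ℂ) • (z + hgen A k * z * hgen A k) := by
  simp [Fk, Ck_apply]

lemma F_center (z : GC A) (hz : z ∈ Subalgebra.center ℂ (GC A)) :
    ∀ K : List (Fin M), ((K.map (Fk A)).prod) z = z := by
  intro K
  induction K with
  | nil => simp
  | cons k K ih =>
      rw [List.map_cons, List.prod_cons, Module.End.mul_apply, ih, Fk_apply]
      have : hgen A k * z = z * hgen A k :=
        Subalgebra.mem_center_iff.mp hz (hgen A k)
      rw [this, mul_assoc, hgen_sq, mul_one]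
      rw [← two_smul ℂ z, smul_smul]
      norm_num

lemma F_prodl (hdiag : ∀ j, A j j = 0) (l : List (Fin M)) :
    ∀ K : List (Fin M), ((K.map (Fk A)).prod) (prodl A l)
      = ((K.map (fun k => (2⁻¹ : ℂ) * (1 + (-1:ℂ) ^ ((l.map (A k)).sum)))).prod)
          • prodl A l := by
  intro K
  induction K with
  | nil => simp
  | cons k K ih =>
      rw [List.map_cons, List.prod_cons, Module.End.mul_apply, ih, map_smul,
        Fk_apply, conj_prodl A hdiag, List.map_cons, List.prod_cons]
      simp only [smul_add, smul_smul]
      rw [← add_smul]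
      congr 1
      ring

/-- Parity: if all the weighted sums are even, then all counts are even. -/
lemma counts_even (hdet : Odd A.det) (l : List (Fin M))
    (hv : ∀ k, Even ((l.map (A k)).sum)) : ∀ j, Even (l.count j) := by
  set B : Matrix (Fin M) (Fin M) (ZMod 2) :=
    (Int.castRingHom (ZMod 2)).mapMatrix A with hB
  have hdetB : IsUnit B.det := by
    rw [← RingHom.map_det]
    obtain ⟨m, hm⟩ := hdet
    have h2 : ((A.det : ℤ) : ZMod 2) = 1 := by
      rw [hm]; push_cast
      rw [show ((2 : ZMod 2)) = 0 from rfl]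
      ring
    show IsUnit ((A.det : ℤ) : ZMod 2)
    rw [h2]; exact isUnit_one
  set c : Fin M → ZMod 2 := fun j => ((l.count j : ℕ) : ZMod 2) with hc
  have hmv : B.mulVec c = 0 := by
    funext k
    have hsum : (l.map (A k)).sum = ∑ j : Fin M, (l.count j : ℤ) * A k j := by
      rw [Finset.sum_list_map_count]
      rw [← Finset.sum_subset (Finset.subset_univ l.toFinset)]
      · apply Finset.sum_congr rfl
        intro j _
        simp [nsmul_eq_mul]
      · intro j _ hj
        have : l.count j = 0 :=
          List.count_eq_zero_of_not_mem (by simpa using hj)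
        simp [this]
    have hcast : ((( l.map (A k)).sum : ℤ) : ZMod 2) = 0 := by
      rw [ZMod.intCast_zmod_eq_zero_iff_dvd]
      exact (even_iff_two_dvd.mp (hv k))
    rw [hsum] at hcast
    push_cast at hcast
    simp only [Matrix.mulVec, dotProduct, Pi.zero_apply]
    rw [← hcast]
    apply Finset.sum_congr rfl
    intro j _
    rw [show B k j = ((A k j : ℤ) : ZMod 2) from rfl, hc, mul_comm]
  have hc0 : c = 0 := by
    have h1 : B⁻¹.mulVec (B.mulVec c) = B⁻¹.mulVec 0 := by rw [hmv]
    rw [Matrix.mulVec_mulVec, Matrix.nonsing_inv_mul B hdetB, Matrix.one_mulVec,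
      Matrix.mulVec_zero] at h1
    exact h1
  intro j
  have : ((l.count j : ℕ) : ZMod 2) = 0 := congrFun hc0 j
  rw [ZMod.natCast_eq_zero_iff] at this
  exact even_iff_two_dvd.mpr this

end GCAux

/-- if the determinant of `A` (as an integer matrix) is odd, then the
center of the graph-Clifford algebra `𝒜(A)` consists exactly of the scalar multiples
of the identity, i.e. it is the bottom subalgebra. -/
theorem stmt1 (M : ℕ) (hM : 1 ≤ M) (A : Matrix (Fin M) (Fin M) ℤ)
    (hsym : A.IsSymm) (h01 : ∀ j k, A j k = 0 ∨ A j k = 1) (hdiag : ∀ j, A j j = 0)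
    (hdet : Odd A.det) :
    Subalgebra.center ℂ (GC A) = ⊥ := by
  rw [eq_bot_iff]
  intro z hz
  set E : Module.End ℂ (GC A) := (((List.finRange M).map (GCAux.Fk A)).prod) with hE
  -- E maps everything into ⊥
  have hEbot : ∀ w : GC A, E w ∈ Subalgebra.toSubmodule (⊥ : Subalgebra ℂ (GC A)) := by
    have hspan : Submodule.span ℂ (GCAux.P A) = ⊤ := GCAux.span_P A
    have hle : Submodule.span ℂ (GCAux.P A)
        ≤ (Subalgebra.toSubmodule (⊥ : Subalgebra ℂ (GC A))).comap E := by
      apply Submodule.span_le.mpr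
      rintro x ⟨l, rfl⟩
      rw [SetLike.mem_coe, Submodule.mem_comap]
      by_cases hodd : ∃ k, Odd ((l.map (A k)).sum)
      · obtain ⟨k0, hk0⟩ := hodd
        have : E (GCAux.prodl A l) = 0 := by
          rw [hE, GCAux.F_prodl A hdiag]
          have hz0 : (0 : ℂ) ∈ (List.finRange M).map
              (fun k => (2⁻¹ : ℂ) * (1 + (-1:ℂ) ^ ((l.map (A k)).sum))) := by
            apply List.mem_map.mpr
            refine ⟨k0, List.mem_finRange k0, ?_⟩
            rw [Odd.neg_one_zpow hk0]
            ring
          rw [List.prod_eq_zero hz0, zero_smul]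
        rw [this]
        exact Submodule.zero_mem _
      · push_neg at hodd
        have heven : ∀ k, Even ((l.map (A k)).sum) := by
          intro k
          exact Int.not_odd_iff_even.mp (hodd k)
        obtain ⟨c, hc⟩ := GCAux.prodl_scalar A hdiag l.length l le_rfl
          (GCAux.counts_even A hdet l heven)
        rw [hE, GCAux.F_prodl A hdiag, hc]
        rw [smul_smul]
        have : (((List.finRange M).map
            (fun k => (2⁻¹ : ℂ) * (1 + (-1:ℂ) ^ ((l.map (A k)).sum)))).prod * c) • (1 : GC A)
            ∈ (⊥ : Subalgebra ℂ (GC A)) := by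
          rw [Algebra.mem_bot]
          exact ⟨_, (Algebra.algebraMap_eq_smul_one (R := ℂ) (A := GC A) _)⟩
        exact this
    intro w
    have : w ∈ Submodule.span ℂ (GCAux.P A) := by rw [hspan]; trivial
    exact hle this
  have hfix : E z = z := GCAux.F_center A z hz (List.finRange M)
  have := hEbot z
  rw [hfix] at this
  exact this

end
end

section
/- If the determinant of A, computed as an integer matrix, is odd, then every commutation pattern is realized in 𝒜(A): for every vector c ∈ {0,1}^M there exists a subset S ⊆ {1,…,M} such that the ordered product g_S satisfies g_S h_k = (−1)^{c_k} h_k g_S for every k = 1,…,M. -/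
noncomputable section

lemma hgen_comm {M : ℕ} (A : Matrix (Fin M) (Fin M) ℤ) (hdiag : ∀ j, A j j = 0)
    (j k : Fin M) :
    hgen A j * hgen A k = ((-1 : ℂ) ^ (A j k)) • (hgen A k * hgen A j) := by
  by_cases h : j = k
  · subst h; simp [hdiag j]
  · have := RingQuot.mkAlgHom_rel ℂ (GCRel.comm (A := A) j k h)
    simpa [hgen, map_mul, map_smul] using this

lemma list_comm {M : ℕ} (A : Matrix (Fin M) (Fin M) ℤ) (hdiag : ∀ j, A j j = 0)
    (k : Fin M) :
    ∀ L : List (Fin M),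
      ((L.map (hgen A)).prod) * hgen A k
        = ((L.map (fun j => (-1 : ℂ) ^ (A j k))).prod) • (hgen A k * (L.map (hgen A)).prod)
  | [] => by simp
  | a :: L => by
      have ih := list_comm A hdiag k L
      simp only [List.map_cons, List.prod_cons]
      rw [mul_assoc, ih, mul_smul_comm, ← mul_assoc, hgen_comm A hdiag a k,
        smul_mul_assoc, smul_smul, mul_comm ((L.map fun j => (-1 : ℂ) ^ (A j k)).prod),
        mul_assoc]

lemma gS_comm {M : ℕ} (A : Matrix (Fin M) (Fin M) ℤ) (hdiag : ∀ j, A j j = 0)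
    (S : Finset (Fin M)) (k : Fin M) :
    gS A S * hgen A k = (∏ j ∈ S, (-1 : ℂ) ^ (A j k)) • (hgen A k * gS A S) := by
  have h := list_comm A hdiag k (S.sort (· ≤ ·))
  have hprod : ((S.sort (· ≤ ·)).map (fun j => (-1 : ℂ) ^ (A j k))).prod
      = ∏ j ∈ S, (-1 : ℂ) ^ (A j k) := by
    rw [Finset.prod, ← Finset.sort_eq S (· ≤ ·), Multiset.map_coe, Multiset.prod_coe]
  rw [gS, h, hprod]

lemma neg_one_pow_val {n : ℕ} : ((-1 : ℂ)) ^ ((n : ZMod 2)).val = (-1 : ℂ) ^ n := by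
  rw [ZMod.val_natCast, ← neg_one_pow_eq_pow_mod_two]

/-- if the determinant of `A` (as an integer matrix) is odd, then every
commutation pattern `c ∈ {0,1}^M` is realized by some ordered product `g_S`:
`g_S h_k = (-1)^(c k) h_k g_S` for all `k`. -/
theorem stmt2 (M : ℕ) (hM : 1 ≤ M) (A : Matrix (Fin M) (Fin M) ℤ)
    (hsym : A.IsSymm) (h01 : ∀ j k, A j k = 0 ∨ A j k = 1) (hdiag : ∀ j, A j j = 0)
    (hdet : Odd A.det) :
    ∀ c : Fin M → ZMod 2, ∃ S : Finset (Fin M),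
      ∀ k : Fin M, gS A S * hgen A k = ((-1 : ℂ) ^ (c k).val) • (hgen A k * gS A S) := by
  intro c
  set B : Matrix (Fin M) (Fin M) (ZMod 2) := A.map (Int.castRingHom (ZMod 2)) with hB
  have hBdet : B.det = 1 := by
    rw [hB, ← RingHom.mapMatrix_apply, ← RingHom.map_det]
    obtain ⟨m, hm⟩ := hdet
    rw [hm]
    push_cast
    ring_nf
    simp [(by decide : (2 : ZMod 2) = 0)]
  have hBunit : IsUnit B.det := by rw [hBdet]; exact isUnit_one
  set x : Fin M → ZMod 2 := B⁻¹.mulVec c with hx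
  have hBx : B.mulVec x = c := by
    rw [hx, Matrix.mulVec_mulVec, Matrix.mul_nonsing_inv B hBunit, Matrix.one_mulVec]
  refine ⟨Finset.univ.filter (fun j => x j = 1), fun k => ?_⟩
  rw [gS_comm A hdiag]
  congr 1
  -- sign computation
  have hsum : ((∑ j ∈ Finset.univ.filter (fun j => x j = 1), (A j k).toNat : ℕ) : ZMod 2)
      = c k := by
    push_cast
    have step1 : ∀ j : Fin M, ((A j k).toNat : ZMod 2) = B j k := by
      intro j
      rcases h01 j k with h | h <;> simp [hB, h, Matrix.map_apply]
    calc (∑ j ∈ Finset.univ.filter (fun j => x j = 1), ((A j k).toNat : ZMod 2))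
        = ∑ j ∈ Finset.univ.filter (fun j => x j = 1), B j k := by
          exact Finset.sum_congr rfl fun j _ => step1 j
      _ = ∑ j : Fin M, x j * B j k := by
          rw [Finset.sum_filter]
          refine Finset.sum_congr rfl fun j _ => ?_
          have h2 : ∀ a : ZMod 2, a = 0 ∨ a = 1 := by decide
          rcases h2 (x j) with h | h <;> simp [h]
      _ = ∑ j : Fin M, B k j * x j := by
          refine Finset.sum_congr rfl fun j _ => ?_
          have hsB : B j k = B k j := by
            simp [hB, Matrix.map_apply, hsym.apply j k]
          rw [hsB, mul_comm]
      _ = (B.mulVec x) k := by simp [Matrix.mulVec, dotProduct]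
      _ = c k := by exact congrFun hBx k
  have hprod : (∏ j ∈ Finset.univ.filter (fun j => x j = 1), (-1 : ℂ) ^ (A j k))
      = (-1 : ℂ) ^ (∑ j ∈ Finset.univ.filter (fun j => x j = 1), (A j k).toNat) := by
    rw [← Finset.prod_pow_eq_pow_sum]
    refine Finset.prod_congr rfl fun j _ => ?_
    rcases h01 j k with h | h <;> simp [h]
  rw [hprod, ← hsum, neg_one_pow_val]

end
end

section
/- The Pauli strings of the defining representation satisfy the graph-Clifford relations and the left and right families mutually commute: for all j, k ∈ {1,…,M}, L_k² = 1, R_k² = 1, L_j L_k = (−1)^{A_{jk}} L_k L_j for j ≠ k, R_j R_k = (−1)^{A_{jk}} R_k R_j for j ≠ k, and L_j R_k = R_k L_j. -/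
noncomputable section

/-- The Pauli `X` operator acting on the `a`-th qubit of the `M`-qubit chain,
as a matrix in the computational basis indexed by bit strings `Fin M → Bool`. -/
def Xop {M : ℕ} (a : Fin M) : Matrix (Fin M → Bool) (Fin M → Bool) ℂ :=
  fun s t => if s = Function.update t a (!(t a)) then 1 else 0

/-- The product `∏_{j ∈ T} Z_j` of Pauli `Z` operators over the sites in `T`
(a diagonal matrix in the computational basis). -/
def Zstring {M : ℕ} (T : Finset (Fin M)) : Matrix (Fin M → Bool) (Fin M → Bool) ℂ :=
  Matrix.diagonal (fun s => ∏ j ∈ T, (if s j then (-1 : ℂ) else 1))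

/-- The left defining-representation Pauli string
`L_k = X_k · ∏_{j<k, A_{jk}=1} Z_j`. -/
def Lop {M : ℕ} (A : Matrix (Fin M) (Fin M) ℤ) (k : Fin M) :
    Matrix (Fin M → Bool) (Fin M → Bool) ℂ :=
  Xop k * Zstring (Finset.univ.filter (fun j => j < k ∧ A j k = 1))

/-- The right defining-representation Pauli string
`R_k = X_k · ∏_{j>k, A_{jk}=1} Z_j`. -/
def Rop {M : ℕ} (A : Matrix (Fin M) (Fin M) ℤ) (k : Fin M) :
    Matrix (Fin M → Bool) (Fin M → Bool) ℂ :=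
  Xop k * Zstring (Finset.univ.filter (fun j => k < j ∧ A j k = 1))

/-- The diagonal sign function of `Zstring T`. -/
def sgn {M : ℕ} (T : Finset (Fin M)) (s : Fin M → Bool) : ℂ :=
  ∏ j ∈ T, (if s j then (-1 : ℂ) else 1)

lemma XZ_apply {M : ℕ} (k : Fin M) (T : Finset (Fin M)) (s t : Fin M → Bool) :
    (Xop k * Zstring T) s t = if s = Function.update t k (!t k) then sgn T t else 0 := by
  rw [show Zstring T = Matrix.diagonal (sgn T) from rfl, Matrix.mul_diagonal]
  simp [Xop, ite_mul]

lemma XZXZ_apply {M : ℕ} (j k : Fin M) (Tj Tk : Finset (Fin M)) (s t : Fin M → Bool) :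
    ((Xop j * Zstring Tj) * (Xop k * Zstring Tk)) s t =
      if s = Function.update (Function.update t k (!t k)) j (!(Function.update t k (!t k) j))
      then sgn Tj (Function.update t k (!t k)) * sgn Tk t else 0 := by
  rw [Matrix.mul_apply]
  simp only [XZ_apply, ite_mul, mul_ite, mul_zero, zero_mul]
  rw [Finset.sum_eq_single (Function.update t k (!t k))] <;> simp +contextual

lemma sgn_flip {M : ℕ} (T : Finset (Fin M)) (k : Fin M) (t : Fin M → Bool) :
    sgn T (Function.update t k (!t k)) = (if k ∈ T then (-1:ℂ) else 1) * sgn T t := by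
  unfold sgn
  by_cases hk : k ∈ T
  · rw [if_pos hk, Finset.prod_eq_mul_prod_sdiff_singleton_of_mem hk,
      Finset.prod_eq_mul_prod_sdiff_singleton_of_mem hk (fun j => if t j then (-1:ℂ) else 1)]
    have h2 : ∏ x ∈ T \ {k}, (if (Function.update t k (!t k)) x then (-1:ℂ) else 1)
        = ∏ x ∈ T \ {k}, (if t x then (-1:ℂ) else 1) := by
      refine Finset.prod_congr rfl fun x hx => ?_
      rw [Function.update_of_ne (by simp at hx; exact hx.2)]
    rw [Function.update_self, h2]
    cases h : t k <;> simp [mul_assoc]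
  · rw [if_neg hk, one_mul]
    refine Finset.prod_congr rfl fun x hx => ?_
    exact if hxk : x = k then absurd (hxk ▸ hx) hk else by rw [Function.update_of_ne hxk]

lemma sgn_sq {M : ℕ} (T : Finset (Fin M)) (t : Fin M → Bool) :
    sgn T t * sgn T t = 1 := by
  unfold sgn
  rw [← Finset.prod_mul_distrib]
  refine Finset.prod_eq_one fun x _ => ?_
  cases t x <;> simp

lemma flip_flip' {M : ℕ} (k : Fin M) (t : Fin M → Bool) :
    Function.update (Function.update t k (!t k)) k (!(Function.update t k (!t k) k)) = t := by
  simp [Function.update_idem]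

lemma flip_comm {M : ℕ} (j k : Fin M) (hjk : j ≠ k) (t : Fin M → Bool) :
    Function.update (Function.update t k (!t k)) j (!(Function.update t k (!t k) j))
    = Function.update (Function.update t j (!t j)) k (!(Function.update t j (!t j) k)) := by
  rw [Function.update_of_ne hjk, Function.update_of_ne (Ne.symm hjk), Function.update_comm hjk]

lemma sq_core {M : ℕ} (k : Fin M) (Tk : Finset (Fin M)) (hk : k ∉ Tk) :
    (Xop k * Zstring Tk) * (Xop k * Zstring Tk) = 1 := by
  ext s t
  rw [XZXZ_apply, flip_flip', sgn_flip, if_neg hk, one_mul, sgn_sq, Matrix.one_apply]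

lemma comm_core {M : ℕ} (j k : Fin M) (hjk : j ≠ k) (Tj Tk : Finset (Fin M)) (c : ℂ)
    (hsign : (if k ∈ Tj then (-1:ℂ) else 1) = c * (if j ∈ Tk then (-1:ℂ) else 1)) :
    (Xop j * Zstring Tj) * (Xop k * Zstring Tk)
      = c • ((Xop k * Zstring Tk) * (Xop j * Zstring Tj)) := by
  ext s t
  rw [Matrix.smul_apply, XZXZ_apply, XZXZ_apply, ← flip_comm j k hjk, smul_eq_mul, mul_ite,
    mul_zero]
  split_ifs with h
  · rw [sgn_flip, sgn_flip, hsign]; ring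
  · rfl

/-- the Pauli strings of the defining representation satisfy the
graph-Clifford relations and the left and right families mutually commute. -/
theorem stmt3 (M : ℕ) (hM : 1 ≤ M) (A : Matrix (Fin M) (Fin M) ℤ)
    (hsym : A.IsSymm) (h01 : ∀ j k, A j k = 0 ∨ A j k = 1) (hdiag : ∀ j, A j j = 0) :
    (∀ k : Fin M, Lop A k * Lop A k = 1) ∧
    (∀ k : Fin M, Rop A k * Rop A k = 1) ∧
    (∀ j k : Fin M, j ≠ k → Lop A j * Lop A k = ((-1 : ℂ) ^ (A j k)) • (Lop A k * Lop A j)) ∧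
    (∀ j k : Fin M, j ≠ k → Rop A j * Rop A k = ((-1 : ℂ) ^ (A j k)) • (Rop A k * Rop A j)) ∧
    (∀ j k : Fin M, Lop A j * Rop A k = Rop A k * Lop A j) := by
  have hAs : ∀ i j, A i j = A j i := fun i j => hsym.apply j i
  refine ⟨fun k => sq_core k _ (by simp), fun k => sq_core k _ (by simp), ?_, ?_, ?_⟩
  · intro j k hjk
    refine comm_core j k hjk _ _ _ ?_
    simp only [Finset.mem_filter, Finset.mem_univ, true_and]
    rcases h01 j k with h0 | h1
    · rw [h0, if_neg (fun hc => by rw [hAs] at h0; omega), if_neg (fun hc => by omega)]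
      norm_num
    · rcases lt_or_gt_of_ne hjk with hlt | hgt
      · rw [h1, if_neg (fun hc => absurd hc.1 (not_lt.2 hlt.le)),
          if_pos ⟨hlt, rfl⟩]
        norm_num
      · rw [h1, if_pos ⟨hgt, by rw [hAs]; exact h1⟩, if_neg (fun hc => absurd hc.1 (not_lt.2 hgt.le))]
        norm_num
  · intro j k hjk
    refine comm_core j k hjk _ _ _ ?_
    simp only [Finset.mem_filter, Finset.mem_univ, true_and]
    rcases h01 j k with h0 | h1
    · rw [h0, if_neg (fun hc => by rw [hAs] at h0; omega), if_neg (fun hc => by omega)]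
      norm_num
    · rcases lt_or_gt_of_ne hjk with hlt | hgt
      · rw [h1, if_pos ⟨hlt, by rw [hAs]; exact h1⟩,
          if_neg (fun hc => absurd hc.1 (not_lt.2 hlt.le))]
        norm_num
      · rw [h1, if_neg (fun hc => absurd hc.1 (not_lt.2 hgt.le)), if_pos ⟨hgt, rfl⟩]
        norm_num
  · intro j k
    by_cases hjk : j = k
    · subst hjk
      ext s t
      rw [Lop, Rop, XZXZ_apply, XZXZ_apply, flip_flip']
      split_ifs with h
      · rw [sgn_flip, sgn_flip, if_neg (by simp), if_neg (by simp)]; ring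
      · rfl
    · have := comm_core j k hjk
        (Finset.univ.filter (fun i => i < j ∧ A i j = 1))
        (Finset.univ.filter (fun i => k < i ∧ A i k = 1)) 1 ?_
      · rw [Lop, Rop, this, one_smul]
      · simp only [Finset.mem_filter, Finset.mem_univ, true_and, one_mul]
        by_cases hc : k < j ∧ A k j = 1
        · rw [if_pos hc, if_pos ⟨hc.1, by rw [hAs]; exact hc.2⟩]
        · rw [if_neg hc, if_neg (fun hc2 => hc ⟨hc2.1, by rw [hAs]; exact hc2.2⟩)]

end
end

section
/- If the determinant of A, computed as an integer matrix, is even, then the defining representation of the tensor product of two copies of the graph-Clifford algebra, i.e. the unique algebra homomorphism ρ : 𝒜(A) ⊗ 𝒜(A) → End((ℂ²)^{⊗M}) with ρ(h_k ⊗ 1) = L_k and ρ(1 ⊗ h_k) = R_k, is not injective. -/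
noncomputable section

open scoped TensorProduct


namespace S5

variable {M : ℕ}

/-- Flip the bits in `U`. -/
def flipF (U : Finset (Fin M)) (t : Fin M → Bool) : Fin M → Bool :=
  fun j => if j ∈ U then !(t j) else t j

/-- Pauli-string-type matrix: X-part `U`, diagonal phase `f`. -/
def PX (U : Finset (Fin M)) (f : (Fin M → Bool) → ℂ) :
    Matrix (Fin M → Bool) (Fin M → Bool) ℂ :=
  fun s t => if s = flipF U t then f t else 0

def zph (T : Finset (Fin M)) (s : Fin M → Bool) : ℂ :=
  ∏ j ∈ T, (if s j then (-1 : ℂ) else 1)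

lemma flipF_empty (t : Fin M → Bool) : flipF ∅ t = t := by
  funext j; simp [flipF]

lemma flipF_flipF (U V : Finset (Fin M)) (t : Fin M → Bool) :
    flipF U (flipF V t) = flipF (symmDiff U V) t := by
  funext j
  by_cases hU : j ∈ U <;> by_cases hV : j ∈ V <;>
    simp [flipF, hU, hV, Finset.mem_symmDiff]

lemma flipF_apply_of_not_mem {U : Finset (Fin M)} {j : Fin M} (h : j ∉ U)
    (t : Fin M → Bool) : flipF U t j = t j := by simp [flipF, h]

lemma PX_mul (U V : Finset (Fin M)) (f g : (Fin M → Bool) → ℂ) :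
    PX U f * PX V g = PX (symmDiff U V) (fun t => f (flipF V t) * g t) := by
  ext s t
  rw [Matrix.mul_apply, Finset.sum_eq_single (flipF V t)]
  · simp only [PX, flipF_flipF]
    by_cases h : s = flipF (symmDiff U V) t <;> simp [h]
  · intro u _ hu
    simp [PX, hu]
  · simp

lemma PX_one : PX (∅ : Finset (Fin M)) (fun _ => (1 : ℂ)) = 1 := by
  ext s t
  simp only [PX, flipF_empty, Matrix.one_apply]

lemma PX_smul (c : ℂ) (U : Finset (Fin M)) (f : (Fin M → Bool) → ℂ) :
    c • PX U f = PX U (fun t => c * f t) := by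
  ext s t
  simp only [PX, Matrix.smul_apply, smul_eq_mul, mul_ite, mul_zero]

lemma zph_mul_self (T : Finset (Fin M)) (t : Fin M → Bool) :
    zph T t * zph T t = 1 := by
  rw [zph, ← Finset.prod_mul_distrib]
  rw [Finset.prod_congr rfl (fun j _ => ?_), Finset.prod_const_one]
  by_cases h : t j <;> simp [h]

lemma zph_flipF (T U : Finset (Fin M)) (t : Fin M → Bool) :
    zph T (flipF U t) = (∏ j ∈ T, (if j ∈ U then (-1 : ℂ) else 1)) * zph T t := by
  rw [zph, zph, ← Finset.prod_mul_distrib]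
  refine Finset.prod_congr rfl (fun j _ => ?_)
  by_cases hU : j ∈ U <;> by_cases ht : t j <;> simp [flipF, hU, ht]

lemma zph_flipF_of_disjoint {T U : Finset (Fin M)} (h : Disjoint T U)
    (t : Fin M → Bool) : zph T (flipF U t) = zph T t := by
  rw [zph_flipF]
  rw [Finset.prod_congr rfl (fun j hj => ?_), Finset.prod_const_one, one_mul]
  simp [Finset.disjoint_left.mp h hj]

lemma zph_all_false (T : Finset (Fin M)) : zph T (fun _ => false) = 1 := by
  simp [zph]

lemma zph_union {T T' : Finset (Fin M)} (h : Disjoint T T') (t : Fin M → Bool) :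
    zph (T ∪ T') t = zph T t * zph T' t := by
  rw [zph, zph, zph, Finset.prod_union h]

end S5

namespace S5
variable {M : ℕ} (A : Matrix (Fin M) (Fin M) ℤ)

def TL (k : Fin M) : Finset (Fin M) := Finset.univ.filter (fun j => j < k ∧ A j k = 1)
def TR (k : Fin M) : Finset (Fin M) := Finset.univ.filter (fun j => k < j ∧ A j k = 1)

lemma Xop_eq (a : Fin M) : Xop a = PX {a} (fun _ => (1 : ℂ)) := by
  ext s t
  have h : Function.update t a (!(t a)) = flipF {a} t := by
    funext j
    by_cases h : j = a
    · subst h; simp [flipF]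
    · simp [flipF, h, Function.update_apply]
  rw [Xop, PX, h]

lemma Zstring_eq (T : Finset (Fin M)) : Zstring T = PX ∅ (zph T) := by
  ext s t
  rw [Zstring, PX, flipF_empty, Matrix.diagonal_apply]
  split_ifs with h
  · subst h; rfl
  · rfl

lemma symmDiff_singleton_empty (k : Fin M) :
    symmDiff ({k} : Finset (Fin M)) ∅ = {k} := by
  ext i; simp [Finset.mem_symmDiff]

lemma Lop_eq (k : Fin M) : Lop A k = PX {k} (zph (TL A k)) := by
  rw [Lop, Xop_eq, Zstring_eq, PX_mul, symmDiff_singleton_empty]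
  simp only [one_mul]
  rfl

lemma Rop_eq (k : Fin M) : Rop A k = PX {k} (zph (TR A k)) := by
  rw [Rop, Xop_eq, Zstring_eq, PX_mul, symmDiff_singleton_empty]
  simp only [one_mul]
  rfl

lemma not_mem_TL (k : Fin M) : k ∉ TL A k := by simp [TL]

lemma Lop_sq (k : Fin M) : Lop A k * Lop A k = 1 := by
  rw [Lop_eq, PX_mul, symmDiff_self]
  have h1 : (fun t => zph (TL A k) (flipF {k} t) * zph (TL A k) t)
      = fun _ => (1 : ℂ) := by
    funext t
    rw [zph_flipF_of_disjoint (Finset.disjoint_singleton_right.mpr (not_mem_TL A k)),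
      zph_mul_self]
  rw [h1]
  exact PX_one

lemma mem_TL_iff (j k : Fin M) : j ∈ TL A k ↔ j < k ∧ A j k = 1 := by simp [TL]

lemma prod_ite_singleton (T : Finset (Fin M)) (a : Fin M) :
    (∏ i ∈ T, (if i ∈ ({a} : Finset (Fin M)) then (-1 : ℂ) else 1))
      = if a ∈ T then (-1 : ℂ) else 1 := by
  simp only [Finset.mem_singleton]
  rw [Finset.prod_ite_eq' T a (fun _ => (-1 : ℂ))]

lemma Lop_comm (hsym : A.IsSymm) (h01 : ∀ j k, A j k = 0 ∨ A j k = 1)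
    {j k : Fin M} (hjk : j ≠ k) :
    Lop A j * Lop A k = ((-1 : ℂ) ^ (A j k)) • (Lop A k * Lop A j) := by
  rw [Lop_eq, Lop_eq, PX_mul, PX_mul, PX_smul]
  have hAkj : A k j = A j k := hsym.apply j k
  have key : (if k ∈ TL A j then (-1 : ℂ) else 1)
      = (-1 : ℂ) ^ (A j k) * (if j ∈ TL A k then (-1 : ℂ) else 1) := by
    rcases h01 j k with h0 | h1
    · rw [h0]; simp [mem_TL_iff, hAkj, h0]
    · rw [h1]
      rcases lt_or_gt_of_ne hjk with h | h
      · rw [if_neg (by rw [mem_TL_iff]; rintro ⟨hlt, -⟩; exact absurd hlt (asymm h)),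
          if_pos ((mem_TL_iff A j k).mpr ⟨h, h1⟩)]
        norm_num
      · rw [if_pos ((mem_TL_iff A k j).mpr ⟨h, by rw [hAkj, h1]⟩),
          if_neg (by rw [mem_TL_iff]; rintro ⟨hlt, -⟩; exact absurd hlt (asymm h))]
        norm_num
  have hphase : (fun t => zph (TL A j) (flipF {k} t) * zph (TL A k) t)
      = fun t => (-1 : ℂ) ^ (A j k) * (zph (TL A k) (flipF {j} t) * zph (TL A j) t) := by
    funext t
    rw [zph_flipF, zph_flipF, prod_ite_singleton, prod_ite_singleton, key]
    ring
  rw [hphase, symmDiff_comm]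

end S5

namespace S5
variable {M : ℕ} (A : Matrix (Fin M) (Fin M) ℤ)

lemma prod_Lop (l : List (Fin M)) (hl : l.Pairwise (· < ·)) :
    (l.map (Lop A)).prod
      = PX l.toFinset (fun t => ∏ k ∈ l.toFinset, zph (TL A k) t) := by
  induction l with
  | nil => simpa using PX_one.symm
  | cons a l ih =>
    obtain ⟨ha, hl'⟩ := List.pairwise_cons.mp hl
    have hnot : a ∉ l.toFinset := by
      simp only [List.mem_toFinset]
      intro hmem
      exact absurd (ha a hmem) (lt_irrefl a)
    rw [List.map_cons, List.prod_cons, ih hl', Lop_eq, PX_mul]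
    have hset : symmDiff ({a} : Finset (Fin M)) l.toFinset = insert a l.toFinset := by
      ext i
      simp only [Finset.mem_symmDiff, Finset.mem_singleton, Finset.mem_insert]
      constructor
      · rintro (⟨rfl, -⟩ | ⟨h, -⟩)
        · exact Or.inl rfl
        · exact Or.inr h
      · rintro (rfl | h)
        · exact Or.inl ⟨rfl, hnot⟩
        · exact Or.inr ⟨h, fun he => hnot (he ▸ h)⟩
    have hdisj : Disjoint (TL A a) l.toFinset := by
      rw [Finset.disjoint_left]
      intro j hj hjl
      have h1 : j < a := ((mem_TL_iff A j a).mp hj).1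
      have h2 : a < j := ha j (List.mem_toFinset.mp hjl)
      exact absurd (h1.trans h2) (lt_irrefl j)
    have hphase : (fun t => zph (TL A a) (flipF l.toFinset t)
          * ∏ k ∈ l.toFinset, zph (TL A k) t)
        = fun t => ∏ k ∈ insert a l.toFinset, zph (TL A k) t := by
      funext t
      rw [zph_flipF_of_disjoint hdisj, Finset.prod_insert hnot]
    rw [hset, hphase, List.toFinset_cons]

lemma prod_Rop (l : List (Fin M)) (hl : l.Pairwise (· < ·)) :
    ∃ ε : ℂ, (l.map (Rop A)).prod
      = PX l.toFinset (fun t => ε * ∏ k ∈ l.toFinset, zph (TR A k) t) := by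
  induction l with
  | nil =>
    refine ⟨1, ?_⟩
    simpa using PX_one.symm
  | cons a l ih =>
    obtain ⟨ha, hl'⟩ := List.pairwise_cons.mp hl
    obtain ⟨ε', hε'⟩ := ih hl'
    have hnot : a ∉ l.toFinset := by
      simp only [List.mem_toFinset]
      intro hmem
      exact absurd (ha a hmem) (lt_irrefl a)
    have hset : symmDiff ({a} : Finset (Fin M)) l.toFinset = insert a l.toFinset := by
      ext i
      simp only [Finset.mem_symmDiff, Finset.mem_singleton, Finset.mem_insert]
      constructor
      · rintro (⟨rfl, -⟩ | ⟨h, -⟩)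
        · exact Or.inl rfl
        · exact Or.inr h
      · rintro (rfl | h)
        · exact Or.inl ⟨rfl, hnot⟩
        · exact Or.inr ⟨h, fun he => hnot (he ▸ h)⟩
    refine ⟨(∏ j ∈ TR A a, (if j ∈ l.toFinset then (-1 : ℂ) else 1)) * ε', ?_⟩
    have hphase : (fun t => zph (TR A a) (flipF l.toFinset t)
          * (ε' * ∏ k ∈ l.toFinset, zph (TR A k) t))
        = fun t => (∏ j ∈ TR A a, (if j ∈ l.toFinset then (-1 : ℂ) else 1)) * ε'
            * ∏ k ∈ insert a l.toFinset, zph (TR A k) t := by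
      funext t
      rw [zph_flipF, Finset.prod_insert hnot]
      ring
    rw [List.map_cons, List.prod_cons, hε', Rop_eq, PX_mul, hset, hphase,
      List.toFinset_cons]

/-- The representation `h_k ↦ L_k` of `GC A`. -/
def lrep (hsym : A.IsSymm) (h01 : ∀ j k, A j k = 0 ∨ A j k = 1) :
    GC A →ₐ[ℂ] Matrix (Fin M → Bool) (Fin M → Bool) ℂ :=
  RingQuot.liftAlgHom ℂ ⟨FreeAlgebra.lift ℂ (Lop A), by
    intro x y h
    cases h with
    | sq k =>
      simp only [map_mul, map_one, FreeAlgebra.lift_ι_apply]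
      exact Lop_sq A k
    | comm j k hjk =>
      simp only [map_mul, map_smul, FreeAlgebra.lift_ι_apply]
      exact Lop_comm A hsym h01 hjk⟩

lemma lrep_hgen (hsym : A.IsSymm) (h01 : ∀ j k, A j k = 0 ∨ A j k = 1) (k : Fin M) :
    lrep A hsym h01 (hgen A k) = Lop A k := by
  rw [hgen, lrep, RingQuot.liftAlgHom_mkAlgHom_apply, FreeAlgebra.lift_ι_apply]

end S5

namespace S5
variable {M : ℕ} (A : Matrix (Fin M) (Fin M) ℤ)

lemma TL_disj_TR (k : Fin M) : Disjoint (TL A k) (TR A k) := by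
  rw [Finset.disjoint_left]
  intro j hj hj'
  have h2 : k < j ∧ A j k = 1 := by simpa [TR] using hj'
  exact absurd (((mem_TL_iff A j k).mp hj).1.trans h2.1) (lt_irrefl j)

lemma TL_union_TR (hdiag : ∀ j, A j j = 0) (k : Fin M) :
    TL A k ∪ TR A k = Finset.univ.filter (fun j => A j k = 1) := by
  ext j
  simp only [TL, TR, Finset.mem_union, Finset.mem_filter, Finset.mem_univ, true_and]
  constructor
  · rintro (⟨-, h⟩ | ⟨-, h⟩) <;> exact h

  · intro h
    have hne : j ≠ k := by
      rintro rfl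
      rw [hdiag j] at h
      exact absurd h (by norm_num)
    rcases lt_or_gt_of_ne hne with hlt | hgt
    · exact Or.inl ⟨hlt, h⟩
    · exact Or.inr ⟨hgt, h⟩

lemma prod_zph_N (hdiag : ∀ j, A j j = 0) (S : Finset (Fin M))
    (hEven : ∀ j, Even ((S.filter (fun k => A j k = 1)).card)) (t : Fin M → Bool) :
    (∏ k ∈ S, zph (Finset.univ.filter (fun j => A j k = 1)) t) = 1 := by
  have h1 : ∀ k, zph (Finset.univ.filter (fun j => A j k = 1)) t
      = ∏ j : Fin M, (if A j k = 1 then (if t j then (-1 : ℂ) else 1) else 1) := by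
    intro k
    rw [zph, Finset.prod_filter]
  calc (∏ k ∈ S, zph (Finset.univ.filter (fun j => A j k = 1)) t)
      = ∏ k ∈ S, ∏ j : Fin M, (if A j k = 1 then (if t j then (-1 : ℂ) else 1) else 1) :=
        Finset.prod_congr rfl (fun k _ => h1 k)
    _ = ∏ j : Fin M, ∏ k ∈ S, (if A j k = 1 then (if t j then (-1 : ℂ) else 1) else 1) :=
        Finset.prod_comm
    _ = 1 := by
        rw [Finset.prod_congr rfl (fun j _ => ?_), Finset.prod_const_one]
        rw [← Finset.prod_filter, Finset.prod_const]
        obtain ⟨m, hm⟩ := hEven j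
        rw [hm]
        by_cases ht : t j
        · rw [if_pos ht, show m + m = 2 * m by ring, pow_mul]
          norm_num
        · rw [if_neg ht, one_pow]

end S5

/-- if the determinant of `A` (as an integer matrix) is even, then the
defining representation `ρ : 𝒜(A) ⊗ 𝒜(A) → End((ℂ²)^⊗M)` of the tensor product of two
copies of the graph-Clifford algebra, determined by `ρ(h_k ⊗ 1) = L_k` and
`ρ(1 ⊗ h_k) = R_k`, is not injective. -/
theorem stmt5 (M : ℕ) (hM : 1 ≤ M) (A : Matrix (Fin M) (Fin M) ℤ)
    (hsym : A.IsSymm) (h01 : ∀ j k, A j k = 0 ∨ A j k = 1) (hdiag : ∀ j, A j j = 0)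
    (hdet : Even A.det) :
    ∀ ρ : (GC A ⊗[ℂ] GC A) →ₐ[ℂ] Matrix (Fin M → Bool) (Fin M → Bool) ℂ,
      (∀ k : Fin M, ρ (hgen A k ⊗ₜ[ℂ] 1) = Lop A k) →
      (∀ k : Fin M, ρ (1 ⊗ₜ[ℂ] hgen A k) = Rop A k) →
      ¬ Function.Injective ρ := by
  intro ρ hL hR hinj
  haveI : Fact (Nat.Prime 2) := ⟨Nat.prime_two⟩
  -- a nonzero mod-2 kernel vector
  set B : Matrix (Fin M) (Fin M) (ZMod 2) := A.map (Int.castRingHom (ZMod 2)) with hB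
  have hdetB : B.det = 0 := by
    have h2 : ((Int.castRingHom (ZMod 2)) A.det) = 0 :=
      (ZMod.intCast_zmod_eq_zero_iff_dvd A.det 2).mpr hdet.two_dvd
    calc B.det = ((Int.castRingHom (ZMod 2)) A.det) :=
          (RingHom.map_det (Int.castRingHom (ZMod 2)) A).symm
      _ = 0 := h2
  obtain ⟨v, hv0, hv⟩ := Matrix.exists_mulVec_eq_zero_iff.mpr hdetB
  have hzmod : ∀ x : ZMod 2, x = 0 ∨ x = 1 := by
    intro x
    fin_cases x
    · exact Or.inl rfl
    · exact Or.inr rfl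
  set S : Finset (Fin M) := Finset.univ.filter (fun k => v k = 1) with hSdef
  have hSne : S.Nonempty := by
    obtain ⟨k, hk⟩ := Function.ne_iff.mp hv0
    refine ⟨k, ?_⟩
    rw [hSdef, Finset.mem_filter]
    rcases hzmod (v k) with h | h
    · exact absurd h hk
    · exact ⟨Finset.mem_univ k, h⟩
  have hEven : ∀ j, Even ((S.filter (fun k => A j k = 1)).card) := by
    intro j
    have hvj : (B.mulVec v) j = 0 := by rw [hv]; rfl
    have hterm : ∀ k, B j k * v k = if (A j k = 1 ∧ v k = 1) then 1 else 0 := by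
      intro k
      rw [hB, Matrix.map_apply]
      rcases h01 j k with h | h <;> rcases hzmod (v k) with h' | h' <;>
        simp [h, h']
    have hsum : (B.mulVec v) j
        = ((Finset.univ.filter (fun k => A j k = 1 ∧ v k = 1)).card : ZMod 2) := by
      rw [Matrix.mulVec, dotProduct]
      rw [Finset.sum_congr rfl (fun k _ => hterm k)]
      rw [Finset.sum_boole]
    have hcard : ((Finset.univ.filter (fun k => A j k = 1 ∧ v k = 1)).card : ZMod 2) = 0 := by
      rw [← hsum, hvj]
    have hfe : Finset.univ.filter (fun k => A j k = 1 ∧ v k = 1)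
        = S.filter (fun k => A j k = 1) := by
      ext k
      rw [hSdef]
      simp only [Finset.mem_filter, Finset.mem_univ, true_and]
      tauto
    rw [hfe] at hcard
    obtain ⟨m, hm⟩ := (ZMod.natCast_eq_zero_iff _ 2).mp hcard
    exact ⟨m, by omega⟩
  -- the sorted list of S
  set l : List (Fin M) := S.sort (· ≤ ·) with hldef
  have hlsort : l.Pairwise (· < ·) := (Finset.sortedLT_sort S).pairwise
  have hltoF : l.toFinset = S := Finset.sort_toFinset S _
  -- matrices
  set fL : (Fin M → Bool) → ℂ := fun t => ∏ k ∈ S, S5.zph (S5.TL A k) t with hfL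
  set gR : (Fin M → Bool) → ℂ := fun t => ∏ k ∈ S, S5.zph (S5.TR A k) t with hgR
  have hprodL : (l.map (Lop A)).prod = S5.PX S fL := by
    rw [S5.prod_Lop A l hlsort, hltoF]
  obtain ⟨ε, hprodR⟩ := S5.prod_Rop A l hlsort
  rw [hltoF] at hprodR
  -- ρ (g_S ⊗ g_S) as a matrix product
  have hρL : ρ (gS A S ⊗ₜ[ℂ] (1 : GC A)) = (l.map (Lop A)).prod := by
    have : ρ (gS A S ⊗ₜ[ℂ] (1 : GC A))
        = (ρ.comp (Algebra.TensorProduct.includeLeft :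
          GC A →ₐ[ℂ] GC A ⊗[ℂ] GC A)) (gS A S) := rfl
    rw [this, gS, map_list_prod, List.map_map]
    congr 1
    refine List.map_congr_left (fun k _ => ?_)
    show ρ ((Algebra.TensorProduct.includeLeft :
        GC A →ₐ[ℂ] GC A ⊗[ℂ] GC A) (hgen A k)) = Lop A k
    rw [Algebra.TensorProduct.includeLeft_apply]
    exact hL k
  have hρR : ρ ((1 : GC A) ⊗ₜ[ℂ] gS A S) = (l.map (Rop A)).prod := by
    have : ρ ((1 : GC A) ⊗ₜ[ℂ] gS A S)
        = (ρ.comp (Algebra.TensorProduct.includeRight)) (gS A S) := rfl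
    rw [this, gS, map_list_prod, List.map_map]
    congr 1
    refine List.map_congr_left (fun k _ => ?_)
    show ρ (Algebra.TensorProduct.includeRight (hgen A k)) = Rop A k
    rw [Algebra.TensorProduct.includeRight_apply]
    exact hR k
  have htmul : gS A S ⊗ₜ[ℂ] gS A S
      = (gS A S ⊗ₜ[ℂ] (1 : GC A)) * ((1 : GC A) ⊗ₜ[ℂ] gS A S) := by
    rw [Algebra.TensorProduct.tmul_mul_tmul, mul_one, one_mul]
  -- the scalar
  set η : ℂ := ∏ k ∈ S, ∏ j ∈ S5.TL A k, (if j ∈ S then (-1 : ℂ) else 1) with hη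
  set c : ℂ := η * ε with hc
  have hfLgR : ∀ t, fL t * gR t = 1 := by
    intro t
    rw [hfL, hgR, ← Finset.prod_mul_distrib]
    have : ∀ k ∈ S, S5.zph (S5.TL A k) t * S5.zph (S5.TR A k) t
        = S5.zph (Finset.univ.filter (fun j => A j k = 1)) t := by
      intro k _
      rw [← S5.zph_union (S5.TL_disj_TR A k), S5.TL_union_TR A hdiag k]
    rw [Finset.prod_congr rfl this]
    exact S5.prod_zph_N A hdiag S hEven t
  have hkey : ρ (gS A S ⊗ₜ[ℂ] gS A S) = c • 1 := by
    rw [htmul, map_mul, hρL, hρR, hprodL, hprodR, S5.PX_mul, symmDiff_self]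
    have hphase : (fun t => fL (S5.flipF S t) * (ε * gR t)) = fun _ => c := by
      funext t
      have h2 : fL (S5.flipF S t) = η * fL t := by
        rw [hfL, hη, ← Finset.prod_mul_distrib]
        refine Finset.prod_congr rfl (fun k _ => ?_)
        rw [S5.zph_flipF]
      rw [h2, hc]
      have := hfLgR t
      calc η * fL t * (ε * gR t) = η * ε * (fL t * gR t) := by ring
        _ = η * ε := by rw [hfLgR t, mul_one]
    rw [hphase]
    have : S5.PX (⊥ : Finset (Fin M)) (fun _ => c) = c • 1 := by
      rw [← S5.PX_one, S5.PX_smul]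
      simp only [mul_one]
      rfl
    exact this
  -- use injectivity
  have hinj_eq : gS A S ⊗ₜ[ℂ] gS A S = c • (1 : GC A ⊗[ℂ] GC A) := by
    apply hinj
    rw [hkey, map_smul, map_one]
  -- separate using the representation lrep ⊗ lrep
  set lr := S5.lrep A hsym h01 with hlr
  set Φ := Algebra.TensorProduct.map lr lr with hΦ
  have hu : lr (gS A S) = S5.PX S fL := by
    rw [gS, map_list_prod, List.map_map, ← hprodL]
    congr 1
    refine List.map_congr_left (fun k _ => ?_)
    exact S5.lrep_hgen A hsym h01 k
  have hΦeq : (S5.PX S fL) ⊗ₜ[ℂ] (S5.PX S fL)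
      = c • ((1 : Matrix (Fin M → Bool) (Fin M → Bool) ℂ) ⊗ₜ[ℂ] 1) := by
    have h1 := congrArg Φ hinj_eq
    rwa [hΦ, Algebra.TensorProduct.map_tmul, hu, map_smul, map_one,
      Algebra.TensorProduct.one_def] at h1
  -- evaluate with a functional
  set t0 : Fin M → Bool := fun _ => false with ht0
  set s1 : Fin M → Bool := S5.flipF S t0 with hs1
  have hs1t0 : s1 ≠ t0 := by
    obtain ⟨a, ha⟩ := hSne
    intro h
    have := congrFun h a
    rw [hs1, ht0] at this
    simp [S5.flipF, ha] at this
  let e : Matrix (Fin M → Bool) (Fin M → Bool) ℂ →ₗ[ℂ] ℂ :=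
    { toFun := fun X => X s1 t0
      map_add' := fun X Y => rfl
      map_smul' := fun r X => rfl }
  have he1 : e 1 = 0 := Matrix.one_apply_ne hs1t0
  have heu : e (S5.PX S fL) = 1 := by
    show S5.PX S fL s1 t0 = 1
    rw [S5.PX, if_pos hs1]
    simp only [hfL, ht0]
    rw [Finset.prod_congr rfl (fun k _ => S5.zph_all_false (S5.TL A k))]
    exact Finset.prod_const_one
  set ψ : (Matrix (Fin M → Bool) (Fin M → Bool) ℂ ⊗[ℂ] Matrix (Fin M → Bool) (Fin M → Bool) ℂ)
      →ₗ[ℂ] Matrix (Fin M → Bool) (Fin M → Bool) ℂ :=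
    (TensorProduct.lid ℂ _).toLinearMap ∘ₗ (LinearMap.rTensor _ e) with hψ
  have hψeq := congrArg ψ hΦeq
  rw [hψ, map_smul] at hψeq
  simp only [LinearMap.comp_apply, LinearMap.rTensor_tmul, LinearEquiv.coe_toLinearMap,
    TensorProduct.lid_tmul] at hψeq
  rw [heu, he1, one_smul, zero_smul, smul_zero] at hψeq
  -- contradiction
  have : (1 : ℂ) = 0 := by
    rw [← heu, hψeq]
    rfl
  exact one_ne_zero this

end
end

section
/- If the determinant of A, computed as an integer matrix, is odd, then the defining representation ρ : 𝒜(A) ⊗ 𝒜(A) → End((ℂ²)^{⊗M}), determined by ρ(h_k ⊗ 1) = L_k and ρ(1 ⊗ h_k) = R_k, is injective; since both algebras have dimension 4^M, ρ is then an isomorphism onto the full operator algebra of the M-qubit chain. -/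
noncomputable section

open scoped TensorProduct


namespace Stmt6Aux

variable {M : ℕ} (A : Matrix (Fin M) (Fin M) ℤ)

lemma hgen_sq (k : Fin M) : hgen A k * hgen A k = 1 := by
  have h := RingQuot.mkAlgHom_rel ℂ (GCRel.sq (A := A) k)
  simpa [hgen, map_mul, map_one] using h

lemma hgen_comm {j k : Fin M} (hjk : j ≠ k) :
    hgen A j * hgen A k = ((-1 : ℂ) ^ (A j k)) • (hgen A k * hgen A j) := by
  have h := RingQuot.mkAlgHom_rel ℂ (GCRel.comm (A := A) j k hjk)
  simpa [hgen, map_mul, map_smul] using h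

lemma key_list : ∀ (l : List (Fin M)), l.Pairwise (· < ·) → ∀ k : Fin M,
    ∃ (c : ℂ) (l' : List (Fin M)), l'.Pairwise (· < ·) ∧ (∀ x ∈ l', x = k ∨ x ∈ l) ∧
      hgen A k * ((l.map (hgen A)).prod) = c • ((l'.map (hgen A)).prod)
  | [], _, k => ⟨1, [k], by simp, by simp, by simp⟩
  | a :: l, hs, k => by
      rw [List.pairwise_cons] at hs
      obtain ⟨ha, hl⟩ := hs
      rcases lt_trichotomy k a with h | h | h
      · refine ⟨1, k :: a :: l, ?_, ?_, by simp⟩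
        · rw [List.pairwise_cons]
          refine ⟨?_, ?_⟩
          · rintro b hb
            rcases List.mem_cons.mp hb with rfl | hb
            · exact h
            · exact h.trans (ha b hb)
          · rw [List.pairwise_cons]; exact ⟨ha, hl⟩
        · intro x hx
          rcases List.mem_cons.mp hx with rfl | hx
          · exact Or.inl rfl
          · exact Or.inr hx
      · subst h
        refine ⟨1, l, hl, fun x hx => Or.inr (List.mem_cons_of_mem _ hx), ?_⟩
        simp [List.prod_cons, ← mul_assoc, hgen_sq]
      · obtain ⟨c, l'', hs'', hmem'', heq''⟩ := key_list l hl k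
        refine ⟨(-1 : ℂ) ^ (A k a) * c, a :: l'', ?_, ?_, ?_⟩
        · rw [List.pairwise_cons]
          refine ⟨?_, hs''⟩
          intro b hb
          rcases hmem'' b hb with rfl | hb
          · exact h
          · exact ha b hb
        · intro x hx
          rcases List.mem_cons.mp hx with rfl | hx
          · exact Or.inr (by simp)
          · rcases hmem'' x hx with rfl | hx
            · exact Or.inl rfl
            · exact Or.inr (List.mem_cons_of_mem _ hx)
        · have hcomm := hgen_comm A (Ne.symm (ne_of_lt h))
          calc hgen A k * ((List.map (hgen A) (a :: l)).prod)
              = (hgen A k * hgen A a) * (List.map (hgen A) l).prod := by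
                simp [List.prod_cons, mul_assoc]
            _ = ((-1 : ℂ) ^ (A k a)) • (hgen A a * (hgen A k * (List.map (hgen A) l).prod)) := by
                rw [hcomm]; simp [smul_mul_assoc, mul_assoc]
            _ = ((-1 : ℂ) ^ (A k a) * c) • ((List.map (hgen A) (a :: l'')).prod) := by
                rw [heq'']; simp [List.prod_cons, mul_smul_comm, mul_smul]

end Stmt6Aux

namespace Stmt6Aux

variable {M : ℕ} (A : Matrix (Fin M) (Fin M) ℤ)

lemma hgen_mul_gS_mem (k : Fin M) (S : Finset (Fin M)) :
    hgen A k * gS A S ∈ Submodule.span ℂ (Set.range (gS A)) := by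
  obtain ⟨c, l', hs', _, heq⟩ := key_list A (S.sort (· ≤ ·)) (Finset.sortedLT_sort S).pairwise k
  have hnd : l'.Nodup := hs'.nodup
  have hfin : (l'.toFinset).sort (· ≤ ·) = l' :=
    (List.toFinset_sort (· ≤ ·) hnd).mpr (hs'.imp le_of_lt)
  have : hgen A k * gS A S = c • gS A l'.toFinset := by
    rw [gS, heq, gS, hfin]
  rw [this]
  exact Submodule.smul_mem _ _ (Submodule.subset_span ⟨l'.toFinset, rfl⟩)

lemma adjoin_hgen_top : Algebra.adjoin ℂ (Set.range (hgen A)) = ⊤ := by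
  have h1 : Set.range (hgen A) =
      (RingQuot.mkAlgHom ℂ (GCRel A)) '' (Set.range (FreeAlgebra.ι ℂ)) := by
    rw [← Set.range_comp]; rfl
  rw [h1, ← AlgHom.map_adjoin, FreeAlgebra.adjoin_range_ι, Algebra.map_top]
  exact (AlgHom.range_eq_top _).mpr (RingQuot.mkAlgHom_surjective ℂ _)

lemma span_gS_top : Submodule.span ℂ (Set.range (gS A)) = ⊤ := by
  set T := Submodule.span ℂ (Set.range (gS A)) with hT
  have hone : (1 : GC A) ∈ T := by
    have : (1 : GC A) = gS A ∅ := by simp [gS]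
    rw [this]; exact Submodule.subset_span ⟨∅, rfl⟩
  have hmul : ∀ (k : Fin M), ∀ x ∈ T, hgen A k * x ∈ T := by
    intro k x hx
    induction hx using Submodule.span_induction with
    | mem x hx => obtain ⟨S, rfl⟩ := hx; exact hgen_mul_gS_mem A k S
    | zero => simpa using Submodule.zero_mem T
    | add x y _ _ hx hy => rw [mul_add]; exact Submodule.add_mem T hx hy
    | smul c x _ hx => rw [mul_smul_comm]; exact Submodule.smul_mem T c hx
  have hlist : ∀ l : List (GC A), (∀ y ∈ l, y ∈ Set.range (hgen A)) → l.prod ∈ T := by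
    intro l
    induction l with
    | nil => intro _; simpa using hone
    | cons y l ih =>
        intro hy
        obtain ⟨k, rfl⟩ := hy y List.mem_cons_self
        rw [List.prod_cons]
        exact hmul k _ (ih fun z hz => hy z (List.mem_cons_of_mem _ hz))
  rw [eq_top_iff]
  have : (⊤ : Submodule ℂ (GC A)) =
      Subalgebra.toSubmodule (Algebra.adjoin ℂ (Set.range (hgen A))) := by
    rw [adjoin_hgen_top]; rfl
  rw [this, Algebra.adjoin_eq_span]
  rw [Submodule.span_le]
  intro x hx
  obtain ⟨l, hl, rfl⟩ := Submonoid.exists_list_of_mem_closure hx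
  exact hlist l hl

instance gc_finite : Module.Finite ℂ (GC A) := by
  letI := Classical.decEq (GC A)
  refine ⟨⟨Finset.univ.image (gS A), ?_⟩⟩
  rw [Finset.coe_image, Finset.coe_univ, Set.image_univ]
  exact span_gS_top A

lemma finrank_gc_le : Module.finrank ℂ (GC A) ≤ 2 ^ M := by
  letI := Classical.decEq (GC A)
  have h := finrank_span_finset_le_card (R := ℂ) (Finset.univ.image (gS A))
  rw [Set.finrank, Finset.coe_image, Finset.coe_univ, Set.image_univ, span_gS_top A,
    finrank_top] at h
  refine h.trans ?_
  calc (Finset.univ.image (gS A)).card ≤ (Finset.univ : Finset (Finset (Fin M))).card :=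
        Finset.card_image_le
    _ = 2 ^ M := by rw [Finset.card_univ, Fintype.card_finset, Fintype.card_fin]

end Stmt6Aux

namespace Stmt6Aux

variable {M : ℕ}

def eps (s : Fin M → Bool) (j : Fin M) : ℂ := if s j then -1 else 1

lemma eps_sq (s : Fin M → Bool) (j : Fin M) : eps s j * eps s j = 1 := by
  unfold eps; split <;> norm_num

lemma Zstring_eq (T : Finset (Fin M)) :
    Zstring T = Matrix.diagonal (fun s => ∏ j ∈ T, eps s j) := rfl

lemma Zstring_mul_self (T : Finset (Fin M)) : Zstring T * Zstring T = 1 := by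
  rw [Zstring_eq, Matrix.diagonal_mul_diagonal, ← Matrix.diagonal_one]
  have h : (fun s : Fin M → Bool => (∏ j ∈ T, eps s j) * ∏ j ∈ T, eps s j)
      = fun _ => (1 : ℂ) := by
    funext s
    rw [← Finset.prod_mul_distrib]
    exact Finset.prod_eq_one fun j _ => eps_sq s j
  rw [h]

lemma Zstring_mul_disjoint {T T' : Finset (Fin M)} (h : Disjoint T T') :
    Zstring T * Zstring T' = Zstring (T ∪ T') := by
  rw [Zstring_eq, Zstring_eq, Zstring_eq, Matrix.diagonal_mul_diagonal]
  have h2 : (fun s : Fin M → Bool => (∏ j ∈ T, eps s j) * ∏ j ∈ T', eps s j)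
      = fun s => ∏ j ∈ T ∪ T', eps s j := by
    funext s
    exact (Finset.prod_union h).symm
  rw [h2]

lemma Xop_mul_Zstring_comm {k : Fin M} {T : Finset (Fin M)} (hk : k ∉ T) :
    Xop k * Zstring T = Zstring T * Xop k := by
  ext s t
  rw [Zstring_eq, Matrix.mul_diagonal, Matrix.diagonal_mul]
  by_cases h : s = Function.update t k (!(t k))
  · have hst : ∀ j ∈ T, eps s j = eps t j := by
      intro j hj
      have hjk : j ≠ k := fun hh => hk (hh ▸ hj)
      rw [h]; unfold eps; rw [Function.update_of_ne hjk]
    rw [Finset.prod_congr rfl hst, mul_comm]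
  · simp [Xop, h]

lemma Xop_mul_self (k : Fin M) : Xop k * Xop k = 1 := by
  ext s t
  rw [Matrix.mul_apply]
  rw [Finset.sum_eq_single (Function.update t k (!(t k)))]
  · have h1 : Function.update (Function.update t k (!(t k))) k
        (!(Function.update t k (!(t k)) k)) = t := by
      rw [Function.update_self]
      simp [Function.update_idem]
    simp [Xop, h1, Matrix.one_apply]
  · intro u _ hu
    simp only [Xop, if_neg hu, mul_zero]
  · intro hu
    exact absurd (Finset.mem_univ _) hu

def flipm (D : Finset (Fin M)) (t : Fin M → Bool) : Fin M → Bool :=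
  fun j => if j ∈ D then !(t j) else t j

def XD (D : Finset (Fin M)) : Matrix (Fin M → Bool) (Fin M → Bool) ℂ :=
  fun s t => if s = flipm D t then 1 else 0

lemma XD_empty : XD (∅ : Finset (Fin M)) = 1 := by
  have : ∀ t : Fin M → Bool, flipm (∅ : Finset (Fin M)) t = t := by
    intro t; funext j; simp [flipm]
  ext s t
  rw [XD, this, Matrix.one_apply]

lemma flipm_insert {a : Fin M} {D : Finset (Fin M)} (ha : a ∉ D) (t : Fin M → Bool) :
    Function.update (flipm D t) a (!(flipm D t a)) = flipm (insert a D) t := by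
  funext j
  by_cases hj : j = a
  · subst hj
    rw [Function.update_self]
    simp [flipm, ha]
  · rw [Function.update_of_ne hj]
    simp [flipm, Finset.mem_insert, hj]

lemma Xop_mul_XD {a : Fin M} {D : Finset (Fin M)} (ha : a ∉ D) :
    Xop a * XD D = XD (insert a D) := by
  ext s t
  rw [Matrix.mul_apply]
  rw [Finset.sum_eq_single (flipm D t)]
  · simp [Xop, XD, flipm_insert ha]
  · intro u _ hu
    simp only [XD, if_neg hu, mul_zero]
  · intro hu
    exact absurd (Finset.mem_univ _) hu

end Stmt6Aux

namespace Stmt6Aux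

variable {M : ℕ}

def Pt (t : Fin M → Bool) : Matrix (Fin M → Bool) (Fin M → Bool) ℂ :=
  Matrix.diagonal (fun u => if u = t then 1 else 0)

def Eu (s t : Fin M → Bool) : Matrix (Fin M → Bool) (Fin M → Bool) ℂ :=
  fun u v => (if u = s then 1 else 0) * (if v = t then 1 else 0)

lemma Pt_eq (t : Fin M → Bool) :
    Pt t = ((2 : ℂ) ^ M)⁻¹ • ∑ T : Finset (Fin M), (∏ j ∈ T, eps t j) • Zstring T := by
  ext u v
  rw [Matrix.smul_apply, Matrix.sum_apply]
  by_cases huv : u = v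
  · subst huv
    simp only [Matrix.smul_apply, Zstring_eq, Matrix.diagonal_apply_eq, smul_eq_mul]
    have hsum : ∑ T : Finset (Fin M), (∏ j ∈ T, eps t j) * (∏ j ∈ T, eps u j)
        = ∏ j : Fin M, (eps t j * eps u j + 1) := by
      rw [Finset.prod_add]
      rw [← Finset.powerset_univ, Finset.sum_congr rfl]
      intro T _
      rw [← Finset.prod_mul_distrib]
      simp
    rw [hsum]
    by_cases hut : u = t
    · subst hut
      have : ∏ j : Fin M, (eps u j * eps u j + 1) = 2 ^ M := by
        rw [Finset.prod_congr rfl (fun j _ => by rw [eps_sq])]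
        rw [Finset.prod_const, Finset.card_univ, Fintype.card_fin]
        norm_num
      rw [this]
      rw [Pt, Matrix.diagonal_apply_eq, if_pos rfl]
      field_simp
    · obtain ⟨j, hj⟩ : ∃ j, u j ≠ t j := by
        by_contra hc
        push_neg at hc
        exact hut (funext hc)
      have hzero : eps t j * eps u j + 1 = 0 := by
        unfold eps
        cases hu : u j <;> cases ht : t j <;> simp_all
      rw [Finset.prod_eq_zero (Finset.mem_univ j) hzero]
      rw [Pt, Matrix.diagonal_apply_eq, if_neg hut]
      simp
  · simp only [Matrix.smul_apply, Zstring_eq, Matrix.diagonal_apply_ne _ huv, smul_eq_mul,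
      mul_zero]
    rw [Pt, Matrix.diagonal_apply_ne _ huv]
    simp

lemma XD_mul_Pt (D : Finset (Fin M)) (t : Fin M → Bool) :
    XD D * Pt t = Eu (flipm D t) t := by
  ext u v
  rw [Pt, Matrix.mul_diagonal, XD, Eu]
  by_cases hv : v = t
  · subst hv; simp
  · simp [hv]

lemma flipm_filter (s t : Fin M → Bool) :
    flipm (Finset.univ.filter (fun j => s j ≠ t j)) t = s := by
  funext j
  by_cases h : s j = t j
  · simp [flipm, h]
  · have : (!(t j)) = s j := by
      cases hs : s j <;> cases ht : t j <;> simp_all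
    simp [flipm, h, this]

lemma matrix_eq_sum (m : Matrix (Fin M → Bool) (Fin M → Bool) ℂ) :
    m = ∑ s : Fin M → Bool, ∑ t : Fin M → Bool, m s t • Eu s t := by
  ext u v
  rw [Matrix.sum_apply]
  simp only [Matrix.sum_apply, Matrix.smul_apply, Eu, smul_eq_mul]
  simp [Finset.sum_ite_eq, mul_ite, ite_mul]

def phi (v : Fin M → ZMod 2) : Matrix (Fin M → Bool) (Fin M → Bool) ℂ :=
  Matrix.diagonal (fun s => ∏ j : Fin M, (eps s j) ^ (v j).val)

lemma phi_zero : phi (0 : Fin M → ZMod 2) = 1 := by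
  rw [phi, ← Matrix.diagonal_one]
  have h : (fun s : Fin M → Bool => ∏ j : Fin M, (eps s j) ^ ((0 : Fin M → ZMod 2) j).val)
      = fun _ => (1 : ℂ) := by
    funext s
    simp [ZMod.val_zero]
  rw [h]

lemma pow_zmod_add (x : ℂ) (hx : x * x = 1) (a b : ZMod 2) :
    x ^ (a + b).val = x ^ a.val * x ^ b.val := by
  have h2 : ZMod.val ((1 : ZMod 2) + 1) = 0 := rfl
  rw [ZMod.val_add, ← pow_add]
  conv_rhs => rw [← Nat.mod_add_div (a.val + b.val) 2]
  rw [pow_add, pow_mul, sq, hx, one_pow, mul_one]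

lemma phi_add (v w : Fin M → ZMod 2) : phi (v + w) = phi v * phi w := by
  rw [phi, phi, phi, Matrix.diagonal_mul_diagonal]
  have h : (fun s : Fin M → Bool => ∏ j : Fin M, (eps s j) ^ ((v + w) j).val)
      = fun s => (∏ j : Fin M, (eps s j) ^ (v j).val) * ∏ j : Fin M, (eps s j) ^ (w j).val := by
    funext s
    rw [← Finset.prod_mul_distrib]
    exact Finset.prod_congr rfl fun j _ => pow_zmod_add _ (eps_sq s j) _ _
  rw [h]

lemma phi_indicator (T : Finset (Fin M)) :
    phi (fun j => if j ∈ T then (1 : ZMod 2) else 0) = Zstring T := by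
  rw [phi, Zstring_eq]
  have h : (fun s : Fin M → Bool =>
      ∏ j : Fin M, (eps s j) ^ ((if j ∈ T then (1 : ZMod 2) else 0)).val)
      = fun s => ∏ j ∈ T, eps s j := by
    funext s
    have h1 : ∀ j ∈ Finset.univ, (eps s j) ^ ((if j ∈ T then (1 : ZMod 2) else 0)).val
        = (if j ∈ T then eps s j else 1) := by
      intro j _
      by_cases h : j ∈ T <;> simp [h, ZMod.val_one]
    rw [Finset.prod_congr rfl h1, Finset.prod_ite_mem, Finset.univ_inter]
  rw [h]

end Stmt6Aux

namespace Stmt6Aux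

variable {M : ℕ} (A : Matrix (Fin M) (Fin M) ℤ)

lemma Lop_mul_Rop (hdiag : ∀ j, A j j = 0) (k : Fin M) :
    Lop A k * Rop A k = Zstring (Finset.univ.filter (fun j => A j k = 1)) := by
  rw [Lop, Rop]
  set T1 := Finset.univ.filter (fun j => j < k ∧ A j k = 1) with hT1
  set T2 := Finset.univ.filter (fun j => k < j ∧ A j k = 1) with hT2
  have hk1 : k ∉ T1 := by simp [hT1]
  have hdisj : Disjoint T1 T2 := by
    rw [Finset.disjoint_left]
    intro j h1 h2
    simp only [hT1, hT2, Finset.mem_filter] at h1 h2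
    exact absurd (h1.2.1.trans h2.2.1) (lt_irrefl j)
  rw [Xop_mul_Zstring_comm hk1, mul_assoc, ← mul_assoc (Xop k) (Xop k), Xop_mul_self,
    one_mul, Zstring_mul_disjoint hdisj]
  have hset : T1 ∪ T2 = Finset.univ.filter (fun j => A j k = 1) := by
    ext j
    simp only [hT1, hT2, Finset.mem_union, Finset.mem_filter, Finset.mem_univ, true_and]
    constructor
    · rintro (⟨_, h⟩ | ⟨_, h⟩) <;> exact h
    · intro h
      have hjk : j ≠ k := by
        intro hh; rw [hh, hdiag k] at h; exact absurd h (by norm_num)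
      rcases lt_or_gt_of_ne hjk with hlt | hgt
      · exact Or.inl ⟨hlt, h⟩
      · exact Or.inr ⟨hgt, h⟩
  rw [hset]

lemma phi_col (h01 : ∀ j k, A j k = 0 ∨ A j k = 1) (k : Fin M) :
    phi (fun j => ((A j k : ℤ) : ZMod 2)) =
      Zstring (Finset.univ.filter fun j => A j k = 1) := by
  have h : (fun j => ((A j k : ℤ) : ZMod 2))
      = fun j => if j ∈ Finset.univ.filter (fun j => A j k = 1) then (1 : ZMod 2) else 0 := by
    funext j
    rcases h01 j k with h | h <;> simp [h]
  rw [h, phi_indicator]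

end Stmt6Aux


/-- if the determinant of `A` (as an integer matrix) is odd, then the
defining representation `ρ : 𝒜(A) ⊗ 𝒜(A) → End((ℂ²)^⊗M)`, determined by
`ρ(h_k ⊗ 1) = L_k` and `ρ(1 ⊗ h_k) = R_k`, is injective; since both algebras have
dimension `4^M`, it is then an isomorphism onto the full operator algebra, i.e.
bijective. -/
theorem stmt6 (M : ℕ) (hM : 1 ≤ M) (A : Matrix (Fin M) (Fin M) ℤ)
    (hsym : A.IsSymm) (h01 : ∀ j k, A j k = 0 ∨ A j k = 1) (hdiag : ∀ j, A j j = 0)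
    (hdet : Odd A.det) :
    ∀ ρ : (GC A ⊗[ℂ] GC A) →ₐ[ℂ] Matrix (Fin M → Bool) (Fin M → Bool) ℂ,
      (∀ k : Fin M, ρ (hgen A k ⊗ₜ[ℂ] 1) = Lop A k) →
      (∀ k : Fin M, ρ (1 ⊗ₜ[ℂ] hgen A k) = Rop A k) →
      Function.Bijective ρ := by
  classical
  intro ρ hL hR
  set S := ρ.range with hS
  have hLmem : ∀ k, Lop A k ∈ S := fun k => ⟨_, hL k⟩
  have hRmem : ∀ k, Rop A k ∈ S := fun k => ⟨_, hR k⟩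
  have hZcol : ∀ k, Zstring (Finset.univ.filter fun j => A j k = 1) ∈ S := by
    intro k
    rw [← Stmt6Aux.Lop_mul_Rop A hdiag k]
    exact mul_mem (hLmem k) (hRmem k)
  -- every phi v is in the range, using invertibility of A mod 2
  have hphiv : ∀ v : Fin M → ZMod 2, Stmt6Aux.phi v ∈ S := by
    intro v
    have hdet2 : IsUnit (A.map (Int.castRingHom (ZMod 2)) : Matrix (Fin M) (Fin M) (ZMod 2)) := by
      rw [Matrix.isUnit_iff_isUnit_det, ← RingHom.mapMatrix_apply, ← RingHom.map_det]
      obtain ⟨n, hn⟩ := hdet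
      have : ((Int.castRingHom (ZMod 2)) A.det : ZMod 2) = 1 := by
        rw [hn]
        rw [map_add, map_mul, map_one]
        rw [show ((Int.castRingHom (ZMod 2)) 2) = 0 from by decide]
        ring
      rw [this]
      exact isUnit_one
    obtain ⟨x, hx⟩ := (Matrix.mulVec_surjective_iff_isUnit.mpr hdet2) v
    have hv : v = ∑ k : Fin M, x k • (fun i => ((A i k : ℤ) : ZMod 2)) := by
      rw [← hx]
      funext i
      rw [Finset.sum_apply]
      simp [Matrix.mulVec, dotProduct, Matrix.map_apply, mul_comm]
    have hzmod : ∀ c : ZMod 2, c = 0 ∨ c = 1 := by decide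
    have hsum : ∀ s : Finset (Fin M),
        Stmt6Aux.phi (∑ k ∈ s, x k • (fun i => ((A i k : ℤ) : ZMod 2))) ∈ S := by
      intro s
      induction s using Finset.induction_on with
      | empty => rw [Finset.sum_empty, Stmt6Aux.phi_zero]; exact one_mem S
      | insert _ _ ha ih =>
          rw [Finset.sum_insert ha, Stmt6Aux.phi_add]
          refine mul_mem ?_ ih
          rcases hzmod (x _) with h0 | h1
          · rw [h0, zero_smul, Stmt6Aux.phi_zero]; exact one_mem S
          · rw [h1, one_smul, Stmt6Aux.phi_col A h01]; exact hZcol _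
    rw [hv]
    exact hsum Finset.univ
  have hZ : ∀ T : Finset (Fin M), Zstring T ∈ S := by
    intro T
    rw [← Stmt6Aux.phi_indicator]
    exact hphiv _
  have hXmem : ∀ k, Xop (M := M) k ∈ S := by
    intro k
    have h1 : Xop (M := M) k
        = Lop A k * Zstring (Finset.univ.filter fun j => j < k ∧ A j k = 1) := by
      rw [Lop, mul_assoc, Stmt6Aux.Zstring_mul_self, mul_one]
    rw [h1]
    exact mul_mem (hLmem k) (hZ _)
  have hXD : ∀ D : Finset (Fin M), Stmt6Aux.XD D ∈ S := by
    intro D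
    induction D using Finset.induction_on with
    | empty => rw [Stmt6Aux.XD_empty]; exact one_mem S
    | insert _ _ ha ih => rw [← Stmt6Aux.Xop_mul_XD ha]; exact mul_mem (hXmem _) ih
  have hPt : ∀ t : Fin M → Bool, Stmt6Aux.Pt t ∈ S := by
    intro t
    rw [Stmt6Aux.Pt_eq]
    exact S.smul_mem (Subalgebra.sum_mem S fun T _ => S.smul_mem (hZ T) _) _
  have hEu : ∀ s t : Fin M → Bool, Stmt6Aux.Eu s t ∈ S := by
    intro s t
    have h := Stmt6Aux.XD_mul_Pt (Finset.univ.filter fun j => s j ≠ t j) t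
    rw [Stmt6Aux.flipm_filter] at h
    rw [← h]
    exact mul_mem (hXD _) (hPt _)
  have hsurj : Function.Surjective ρ := by
    intro m
    have hm : m ∈ S := by
      rw [Stmt6Aux.matrix_eq_sum m]
      exact Subalgebra.sum_mem S fun s _ =>
        Subalgebra.sum_mem S fun t _ => S.smul_mem (hEu s t) _
    exact hm
  -- injectivity via dimension count
  haveI : Module.Finite ℂ (GC A) := Stmt6Aux.gc_finite A
  have hle : Module.finrank ℂ (GC A ⊗[ℂ] GC A) ≤ 4 ^ M := by
    rw [Module.finrank_tensorProduct]
    calc Module.finrank ℂ (GC A) * Module.finrank ℂ (GC A)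
        ≤ 2 ^ M * 2 ^ M := Nat.mul_le_mul (Stmt6Aux.finrank_gc_le A) (Stmt6Aux.finrank_gc_le A)
      _ = 4 ^ M := by rw [← mul_pow]; norm_num
  have hmat : Module.finrank ℂ (Matrix (Fin M → Bool) (Fin M → Bool) ℂ) = 4 ^ M := by
    rw [Module.finrank_matrix]
    rw [Module.finrank_self, Fintype.card_fun, Fintype.card_bool, Fintype.card_fin]
    rw [mul_one, ← mul_pow]; norm_num
  have hrange : LinearMap.range ρ.toLinearMap = ⊤ := LinearMap.range_eq_top.mpr hsurj
  have h3 := LinearMap.finrank_range_add_finrank_ker (K := ℂ) (V := GC A ⊗[ℂ] GC A) ρ.toLinearMap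
  rw [hrange, finrank_top, hmat] at h3
  have hker : Module.finrank ℂ (LinearMap.ker ρ.toLinearMap) = 0 := by omega
  have hinj : Function.Injective ρ.toLinearMap :=
    (LinearMap.injective_iff_surjective_of_finrank_eq_finrank (K := ℂ) (V := GC A ⊗[ℂ] GC A)
      (by rw [hmat]; omega) (f := ρ.toLinearMap)).mpr hsurj
  exact ⟨hinj, hsurj⟩

end
end

section
/- Fix coupling constants b_1,…,b_M ∈ ℂ, set H = Σ_{j=1}^M b_j h_j ∈ 𝒜(A), and let H_A = Σ_{j=1}^M b_j (L_j − R_j) act on (ℂ²)^{⊗M}. Then for every x ∈ 𝒜(A) with H x = x H one has H_A φ(x) = 0. In particular, taking x = 1, the all-zeros computational basis state |00⋯0⟩ = φ(1) satisfies H_A |00⋯0⟩ = 0. -/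
noncomputable section


/-- The computational basis state `|s⟩` with `s_i = 1` iff `i ∈ S`. -/
def stateOf {M : ℕ} (S : Finset (Fin M)) : (Fin M → Bool) → ℂ :=
  fun s => if s = (fun i => decide (i ∈ S)) then 1 else 0
noncomputable section

namespace Stmt7Aux

variable {M : ℕ}

/-- Flip the `k`-th bit. -/
def flip (k : Fin M) (t : Fin M → Bool) : Fin M → Bool :=
  Function.update t k (!(t k))

lemma flip_apply_self (k : Fin M) (t : Fin M → Bool) : flip k t k = !(t k) := by
  simp [flip]

lemma flip_apply_ne (k j : Fin M) (t : Fin M → Bool) (h : j ≠ k) : flip k t j = t j := by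
  simp [flip, Function.update_of_ne h]

lemma flip_flip (k : Fin M) (t : Fin M → Bool) : flip k (flip k t) = t := by
  funext i
  by_cases h : i = k
  · subst h; simp [flip]
  · simp [flip_apply_ne _ _ _ h]

lemma flip_comm (j k : Fin M) (t : Fin M → Bool) :
    flip j (flip k t) = flip k (flip j t) := by
  by_cases hjk : j = k
  · subst hjk; rfl
  · funext i
    by_cases h1 : i = j
    · subst h1
      rw [flip_apply_self, flip_apply_ne _ _ _ hjk, flip_apply_ne _ _ _ hjk,
        flip_apply_self]
    · by_cases h2 : i = k
      · subst h2
        rw [flip_apply_ne _ _ _ (Ne.symm hjk), flip_apply_self, flip_apply_self,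
          flip_apply_ne _ _ _ (Ne.symm hjk)]
      · rw [flip_apply_ne _ _ _ h1, flip_apply_ne _ _ _ h2, flip_apply_ne _ _ _ h2,
          flip_apply_ne _ _ _ h1]

/-- The diagonal value of a `Z`-string. -/
def zf (T : Finset (Fin M)) (t : Fin M → Bool) : ℂ :=
  ∏ j ∈ T, (if t j then (-1 : ℂ) else 1)

lemma zf_flip (T : Finset (Fin M)) (k : Fin M) (t : Fin M → Bool) :
    zf T (flip k t) = (if k ∈ T then (-1 : ℂ) else 1) * zf T t := by
  by_cases hk : k ∈ T
  · rw [if_pos hk, zf, zf, ← Finset.mul_prod_erase T _ hk, ← Finset.mul_prod_erase T _ hk]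
    have h1 : ∏ j ∈ T.erase k, (if flip k t j then (-1 : ℂ) else 1)
        = ∏ j ∈ T.erase k, (if t j then (-1 : ℂ) else 1) := by
      refine Finset.prod_congr rfl fun j hj => ?_
      rw [flip_apply_ne _ _ _ (Finset.ne_of_mem_erase hj)]
    rw [h1, flip_apply_self]
    cases t k <;> simp
  · rw [if_neg hk, one_mul, zf, zf]
    refine Finset.prod_congr rfl fun j hj => ?_
    have hne : flip k t j = t j := flip_apply_ne _ _ _ (by rintro rfl; exact hk hj)
    rw [hne]

lemma zf_sq (T : Finset (Fin M)) (t : Fin M → Bool) : zf T t * zf T t = 1 := by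
  rw [zf, ← Finset.prod_mul_distrib]
  refine Finset.prod_eq_one fun j _ => ?_
  cases t j <;> simp

/-- Matrix of the form `X_k · Z_T`. -/
def opF (k : Fin M) (T : Finset (Fin M)) : Matrix (Fin M → Bool) (Fin M → Bool) ℂ :=
  Matrix.of fun s t => if s = flip k t then zf T t else 0

lemma opF_apply (k : Fin M) (T : Finset (Fin M)) (s t : Fin M → Bool) :
    opF k T s t = if s = flip k t then zf T t else 0 := rfl

def TL (A : Matrix (Fin M) (Fin M) ℤ) (k : Fin M) : Finset (Fin M) :=
  Finset.univ.filter (fun j => j < k ∧ A j k = 1)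

def TR (A : Matrix (Fin M) (Fin M) ℤ) (k : Fin M) : Finset (Fin M) :=
  Finset.univ.filter (fun j => k < j ∧ A j k = 1)

lemma mem_TL {A : Matrix (Fin M) (Fin M) ℤ} {j k : Fin M} :
    j ∈ TL A k ↔ j < k ∧ A j k = 1 := by simp [TL]

lemma mem_TR {A : Matrix (Fin M) (Fin M) ℤ} {j k : Fin M} :
    j ∈ TR A k ↔ k < j ∧ A j k = 1 := by simp [TR]

lemma Lop_eq (A : Matrix (Fin M) (Fin M) ℤ) (k : Fin M) : Lop A k = opF k (TL A k) := by
  unfold Lop Zstring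
  ext s t
  rw [Matrix.mul_diagonal]
  simp only [Xop, opF, Matrix.of_apply, ite_mul, one_mul, zero_mul]
  rfl

lemma Rop_eq (A : Matrix (Fin M) (Fin M) ℤ) (k : Fin M) : Rop A k = opF k (TR A k) := by
  unfold Rop Zstring
  ext s t
  rw [Matrix.mul_diagonal]
  simp only [Xop, opF, Matrix.of_apply, ite_mul, one_mul, zero_mul]
  rfl

lemma opF_mul_apply (k₁ k₂ : Fin M) (T₁ T₂ : Finset (Fin M)) (s t : Fin M → Bool) :
    (opF k₁ T₁ * opF k₂ T₂) s t =
      if s = flip k₁ (flip k₂ t) then zf T₁ (flip k₂ t) * zf T₂ t else 0 := by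
  rw [Matrix.mul_apply]
  rw [Finset.sum_eq_single (flip k₂ t)]
  · rw [opF_apply, opF_apply, if_pos rfl]
    split_ifs <;> simp
  · intro u _ hu
    rw [opF_apply k₂, if_neg hu, mul_zero]
  · intro h; exact absurd (Finset.mem_univ _) h

lemma L_sq (A : Matrix (Fin M) (Fin M) ℤ) (k : Fin M) : Lop A k * Lop A k = 1 := by
  funext s t
  have h1 : (Lop A k * Lop A k) s t
      = if s = t then zf (TL A k) (flip k t) * zf (TL A k) t else 0 := by
    rw [Lop_eq, opF_mul_apply, flip_flip]
  have hk : k ∉ TL A k := by simp [mem_TL]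
  rw [h1, Matrix.one_apply, zf_flip, if_neg hk, one_mul, zf_sq]

lemma L_comm (A : Matrix (Fin M) (Fin M) ℤ) (hsym : A.IsSymm)
    (h01 : ∀ j k, A j k = 0 ∨ A j k = 1) (j k : Fin M) (hjk : j ≠ k) :
    Lop A j * Lop A k = ((-1 : ℂ) ^ (A j k)) • (Lop A k * Lop A j) := by
  funext s t
  have hL : (Lop A j * Lop A k) s t
      = if s = flip j (flip k t) then zf (TL A j) (flip k t) * zf (TL A k) t else 0 := by
    rw [Lop_eq, Lop_eq, opF_mul_apply]
  have hR : (Lop A k * Lop A j) s t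
      = if s = flip j (flip k t) then zf (TL A k) (flip j t) * zf (TL A j) t else 0 := by
    rw [Lop_eq, Lop_eq, opF_mul_apply, flip_comm]
  rw [Matrix.smul_apply, hL, hR, smul_eq_mul, mul_ite, mul_zero]
  by_cases hs : s = flip j (flip k t)
  · rw [if_pos hs, if_pos hs, zf_flip (TL A j) k t, zf_flip (TL A k) j t]
    have key : (if k ∈ TL A j then (-1 : ℂ) else 1)
        = ((-1 : ℂ) ^ (A j k)) * (if j ∈ TL A k then (-1 : ℂ) else 1) := by
      rcases lt_or_gt_of_ne hjk with h | h
      · have h1 : k ∉ TL A j := by simp [mem_TL, lt_asymm h]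
        rcases h01 j k with h0 | h0
        · have h2 : j ∉ TL A k := by simp [mem_TL, h0]
          rw [if_neg h1, if_neg h2, h0]; norm_num
        · have h2 : j ∈ TL A k := mem_TL.mpr ⟨h, h0⟩
          rw [if_neg h1, if_pos h2, h0]; norm_num
      · have h2 : j ∉ TL A k := by simp [mem_TL, lt_asymm h]
        rcases h01 j k with h0 | h0
        · have h1 : k ∉ TL A j := by
            simp [mem_TL, hsym.apply j k, h0]
          rw [if_neg h1, if_neg h2, h0]; norm_num
        · have h1 : k ∈ TL A j := mem_TL.mpr ⟨h, by rw [hsym.apply j k]; exact h0⟩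
          rw [if_pos h1, if_neg h2, h0]; norm_num
    rw [key]; ring
  · rw [if_neg hs, if_neg hs]

lemma LR_comm (A : Matrix (Fin M) (Fin M) ℤ) (hsym : A.IsSymm) (j k : Fin M) :
    Lop A j * Rop A k = Rop A k * Lop A j := by
  funext s t
  have hL : (Lop A j * Rop A k) s t
      = if s = flip j (flip k t) then zf (TL A j) (flip k t) * zf (TR A k) t else 0 := by
    rw [Lop_eq, Rop_eq, opF_mul_apply]
  have hR : (Rop A k * Lop A j) s t
      = if s = flip j (flip k t) then zf (TR A k) (flip j t) * zf (TL A j) t else 0 := by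
    rw [Lop_eq, Rop_eq, opF_mul_apply, flip_comm]
  rw [hL, hR]
  by_cases hs : s = flip j (flip k t)
  · rw [if_pos hs, if_pos hs, zf_flip (TL A j) k t, zf_flip (TR A k) j t]
    have key : (k ∈ TL A j) ↔ (j ∈ TR A k) := by
      rw [mem_TL, mem_TR, hsym.apply j k]
    rw [if_congr key rfl rfl]; ring
  · rw [if_neg hs, if_neg hs]

lemma opF_mulVec (k : Fin M) (T : Finset (Fin M)) (S : Finset (Fin M)) :
    (opF k T).mulVec (stateOf S) =
      fun s => if s = flip k (fun i => decide (i ∈ S))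
        then zf T (fun i => decide (i ∈ S)) else 0 := by
  funext s
  rw [Matrix.mulVec, dotProduct]
  rw [Finset.sum_eq_single (fun i => decide (i ∈ S))]
  · simp [opF_apply, stateOf]
  · intro u _ hu
    simp only [stateOf]
    rw [if_neg hu, mul_zero]
  · intro h; exact absurd (Finset.mem_univ _) h

lemma flip_chi (k : Fin M) (S : Finset (Fin M)) (hk : k ∉ S) :
    flip k (fun i => decide (i ∈ S)) = fun i => decide (i ∈ insert k S) := by
  funext i
  by_cases h : i = k
  · subst h; simp [flip_apply_self, hk]
  · rw [flip_apply_ne _ _ _ h]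
    simp [Finset.mem_insert, h]

lemma Lact (A : Matrix (Fin M) (Fin M) ℤ) (k : Fin M) (S : Finset (Fin M))
    (h : ∀ j ∈ S, k < j) :
    (Lop A k).mulVec (stateOf S) = stateOf (insert k S) := by
  have hk : k ∉ S := fun hc => lt_irrefl k (h k hc)
  rw [Lop_eq, opF_mulVec, flip_chi k S hk]
  have hz : zf (TL A k) (fun i => decide (i ∈ S)) = 1 := by
    refine Finset.prod_eq_one fun j hj => ?_
    have hjS : j ∉ S := fun hc => absurd ((mem_TL.mp hj).1.trans (h j hc)) (lt_irrefl j)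
    simp [hjS]
  rw [hz]
  rfl

lemma Ract (A : Matrix (Fin M) (Fin M) ℤ) (k : Fin M) (S : Finset (Fin M))
    (h : ∀ j ∈ S, j < k) :
    (Rop A k).mulVec (stateOf S) = stateOf (insert k S) := by
  have hk : k ∉ S := fun hc => lt_irrefl k (h k hc)
  rw [Rop_eq, opF_mulVec, flip_chi k S hk]
  have hz : zf (TR A k) (fun i => decide (i ∈ S)) = 1 := by
    refine Finset.prod_eq_one fun j hj => ?_
    have hjS : j ∉ S := fun hc => absurd ((h j hc).trans (mem_TR.mp hj).1) (lt_irrefl j)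
    simp [hjS]
  rw [hz]
  rfl

end Stmt7Aux

end
noncomputable section
namespace Stmt7Aux

variable {M : ℕ} (A : Matrix (Fin M) (Fin M) ℤ)

lemma hsq (k : Fin M) : hgen A k * hgen A k = 1 := by
  have h := RingQuot.mkAlgHom_rel ℂ (GCRel.sq (A := A) k)
  rwa [map_mul, map_one] at h

lemma hcomm (j k : Fin M) (hjk : j ≠ k) :
    hgen A j * hgen A k = ((-1 : ℂ) ^ (A j k)) • (hgen A k * hgen A j) := by
  have h := RingQuot.mkAlgHom_rel ℂ (GCRel.comm (A := A) j k hjk)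
  rwa [map_mul, map_smul, map_mul] at h

/-- The product of generators along a list. -/
def gl (l : List (Fin M)) : GC A := (l.map (hgen A)).prod

lemma gl_nil : gl A [] = 1 := rfl

lemma gl_cons (a : Fin M) (t : List (Fin M)) : gl A (a :: t) = hgen A a * gl A t := by
  simp [gl]

lemma mul_gl (k : Fin M) (l : List (Fin M)) (hl : l.Pairwise (· < ·)) :
    ∃ (c : ℂ) (l' : List (Fin M)), l'.Pairwise (· < ·) ∧ (∀ j ∈ l', j ∈ k :: l) ∧
      hgen A k * gl A l = c • gl A l' := by
  induction l with
  | nil =>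
      refine ⟨1, [k], by simp, by simp, ?_⟩
      rw [one_smul, gl_cons, gl_nil]
  | cons a t ih =>
      have hat : ∀ j ∈ t, a < j := (List.pairwise_cons.mp hl).1
      have ht : t.Pairwise (· < ·) := (List.pairwise_cons.mp hl).2
      rcases lt_trichotomy k a with h | h | h
      · refine ⟨1, k :: a :: t, ?_, fun j hj => hj, ?_⟩
        · refine List.pairwise_cons.mpr ⟨fun j hj => ?_, hl⟩
          rcases List.mem_cons.mp hj with rfl | hj'
          · exact h
          · exact h.trans (hat j hj')
        · rw [one_smul]
          rw [gl_cons A k (a :: t)]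
      · subst h
        refine ⟨1, t, ht, fun j hj => List.mem_cons_of_mem _ (List.mem_cons_of_mem _ hj), ?_⟩
        rw [gl_cons, ← mul_assoc, hsq, one_mul, one_smul]
      · obtain ⟨c, l', hl', hmem, heq⟩ := ih ht
        refine ⟨((-1 : ℂ) ^ (A k a)) * c, a :: l', ?_, ?_, ?_⟩
        · refine List.pairwise_cons.mpr ⟨fun j hj => ?_, hl'⟩
          rcases List.mem_cons.mp (hmem j hj) with rfl | hj'
          · exact h
          · exact hat j hj'
        · intro j hj
          rcases List.mem_cons.mp hj with rfl | hj'
          · exact List.mem_cons_of_mem _ List.mem_cons_self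
          · rcases List.mem_cons.mp (hmem j hj') with rfl | hj''
            · exact List.mem_cons_self
            · exact List.mem_cons_of_mem _ (List.mem_cons_of_mem _ hj'')
        · calc hgen A k * gl A (a :: t)
              = (hgen A k * hgen A a) * gl A t := by rw [gl_cons, mul_assoc]
            _ = (((-1 : ℂ) ^ (A k a)) • (hgen A a * hgen A k)) * gl A t := by
                rw [hcomm A k a (ne_of_gt h)]
            _ = ((-1 : ℂ) ^ (A k a)) • (hgen A a * (hgen A k * gl A t)) := by
                rw [smul_mul_assoc, mul_assoc]
            _ = ((-1 : ℂ) ^ (A k a)) • (hgen A a * (c • gl A l')) := by rw [heq]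
            _ = (((-1 : ℂ) ^ (A k a)) * c) • gl A (a :: l') := by
                rw [gl_cons, mul_smul_comm, smul_smul]

/-- The spanning set of ordered products of generators. -/
def SpanSet : Set (GC A) := {x | ∃ l : List (Fin M), l.Pairwise (· < ·) ∧ gl A l = x}

lemma mul_mem_span (k : Fin M) {p : GC A}
    (hp : p ∈ Submodule.span ℂ (SpanSet A)) :
    hgen A k * p ∈ Submodule.span ℂ (SpanSet A) := by
  induction hp using Submodule.span_induction with
  | mem x hx =>
      obtain ⟨l, hl, rfl⟩ := hx
      obtain ⟨c, l', hl', _, heq⟩ := mul_gl A k l hl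
      rw [heq]
      exact Submodule.smul_mem _ _ (Submodule.subset_span ⟨l', hl', rfl⟩)
  | zero => rw [mul_zero]; exact Submodule.zero_mem _
  | add x y hx hy ihx ihy => rw [mul_add]; exact Submodule.add_mem _ ihx ihy
  | smul a x hx ihx => rw [mul_smul_comm]; exact Submodule.smul_mem _ _ ihx

lemma adjoin_hgen_top : Algebra.adjoin ℂ (Set.range (hgen A)) = ⊤ := by
  have h1 : Set.range (hgen A)
      = (RingQuot.mkAlgHom ℂ (GCRel A)) '' (Set.range (FreeAlgebra.ι ℂ)) := by
    rw [← Set.range_comp]; rfl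
  rw [h1, ← AlgHom.map_adjoin, FreeAlgebra.adjoin_range_ι, Algebra.map_top,
    AlgHom.range_eq_top]
  exact RingQuot.mkAlgHom_surjective ℂ (GCRel A)

lemma mem_span_all (x : GC A) : x ∈ Submodule.span ℂ (SpanSet A) := by
  have hx : x ∈ Algebra.adjoin ℂ (Set.range (hgen A)) := by
    rw [adjoin_hgen_top]; exact Algebra.mem_top
  have hmain : ∀ p ∈ Submodule.span ℂ (SpanSet A), x * p ∈ Submodule.span ℂ (SpanSet A) := by
    induction hx using Algebra.adjoin_induction with
    | mem y hy =>
        obtain ⟨k, rfl⟩ := hy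
        exact fun p hp => mul_mem_span A k hp
    | algebraMap r =>
        intro p hp
        rw [← Algebra.smul_def]
        exact Submodule.smul_mem _ _ hp
    | add y z hy hz ihy ihz =>
        intro p hp
        rw [add_mul]
        exact Submodule.add_mem _ (ihy p hp) (ihz p hp)
    | mul y z hy hz ihy ihz =>
        intro p hp
        rw [mul_assoc]
        exact ihy _ (ihz p hp)
  have h1 : (1 : GC A) ∈ Submodule.span ℂ (SpanSet A) :=
    Submodule.subset_span ⟨[], List.Pairwise.nil, rfl⟩
  simpa using hmain 1 h1

/-- The left defining representation of the graph-Clifford algebra. -/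
def rep (hsym : A.IsSymm) (h01 : ∀ j k, A j k = 0 ∨ A j k = 1) :
    GC A →ₐ[ℂ] Matrix (Fin M → Bool) (Fin M → Bool) ℂ :=
  RingQuot.liftAlgHom ℂ ⟨FreeAlgebra.lift ℂ (Lop A), by
    rintro x y (⟨k⟩ | ⟨j, k, hjk⟩)
    · simp only [map_mul, map_one, FreeAlgebra.lift_ι_apply]
      exact L_sq A k
    · simp only [map_mul, map_smul, FreeAlgebra.lift_ι_apply]
      exact L_comm A hsym h01 j k hjk⟩

variable (hsym : A.IsSymm) (h01 : ∀ j k, A j k = 0 ∨ A j k = 1)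

lemma rep_h (k : Fin M) : rep A hsym h01 (hgen A k) = Lop A k := by
  unfold rep hgen
  rw [RingQuot.liftAlgHom_mkAlgHom_apply, FreeAlgebra.lift_ι_apply]

lemma liftL_commute_R (hsym : A.IsSymm) (k : Fin M) (y : FreeAlgebra ℂ (Fin M)) :
    FreeAlgebra.lift ℂ (Lop A) y * Rop A k = Rop A k * FreeAlgebra.lift ℂ (Lop A) y := by
  induction y using FreeAlgebra.induction with
  | grade0 r => rw [AlgHom.commutes]; exact Algebra.commutes r (Rop A k)
  | grade1 i => rw [FreeAlgebra.lift_ι_apply]; exact LR_comm A hsym i k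
  | mul a b ha hb => rw [map_mul, mul_assoc, hb, ← mul_assoc, ha, mul_assoc]
  | add a b ha hb => rw [map_add, add_mul, mul_add, ha, hb]

lemma rep_commute_R (x : GC A) (k : Fin M) :
    rep A hsym h01 x * Rop A k = Rop A k * rep A hsym h01 x := by
  obtain ⟨y, rfl⟩ := RingQuot.mkAlgHom_surjective ℂ (GCRel A) x
  have hrep : rep A hsym h01 (RingQuot.mkAlgHom ℂ (GCRel A) y)
      = FreeAlgebra.lift ℂ (Lop A) y := by
    unfold rep; rw [RingQuot.liftAlgHom_mkAlgHom_apply]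
  rw [hrep]
  exact liftL_commute_R A hsym k y

lemma rep_gl (l : List (Fin M)) (hl : l.Pairwise (· < ·)) :
    (rep A hsym h01 (gl A l)).mulVec (stateOf ∅) = stateOf l.toFinset := by
  induction l with
  | nil =>
      rw [gl_nil, map_one, Matrix.one_mulVec, List.toFinset_nil]
  | cons a t ih =>
      have hat : ∀ j ∈ t, a < j := (List.pairwise_cons.mp hl).1
      rw [gl_cons, map_mul, rep_h, ← Matrix.mulVec_mulVec,
        ih (List.pairwise_cons.mp hl).2,
        Lact A a t.toFinset (fun j hj => hat j (List.mem_toFinset.mp hj)),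
        List.toFinset_cons]

lemma gS_gl (l : List (Fin M)) (hl : l.Pairwise (· < ·)) : gS A l.toFinset = gl A l := by
  have hnd : l.Nodup := hl.imp ne_of_lt
  have hsorted : l.Pairwise (· ≤ ·) := hl.imp le_of_lt
  unfold gS gl
  rw [(List.toFinset_sort (· ≤ ·) hnd).mpr hsorted]

end Stmt7Aux
end

/-- with `H = Σ_j b_j h_j ∈ 𝒜(A)` and `H_A = Σ_j b_j (L_j − R_j)` acting
on the `M`-qubit chain, every `x ∈ 𝒜(A)` commuting with `H` is mapped by the
operator-state correspondence `φ` to a null vector of `H_A`; in particular the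
all-zeros state `|00⋯0⟩ = φ(1)` is a null vector of `H_A`. -/
theorem stmt7 (M : ℕ) (hM : 1 ≤ M) (A : Matrix (Fin M) (Fin M) ℤ)
    (hsym : A.IsSymm) (h01 : ∀ j k, A j k = 0 ∨ A j k = 1) (hdiag : ∀ j, A j j = 0)
    (b : Fin M → ℂ) :
    (∀ φ : GC A →ₗ[ℂ] ((Fin M → Bool) → ℂ),
      (∀ S : Finset (Fin M), φ (gS A S) = stateOf S) →
      ∀ x : GC A,
        (∑ j : Fin M, b j • hgen A j) * x = x * (∑ j : Fin M, b j • hgen A j) →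
        (∑ j : Fin M, b j • (Lop A j - Rop A j)).mulVec (φ x) = 0) ∧
    (∑ j : Fin M, b j • (Lop A j - Rop A j)).mulVec (stateOf (∅ : Finset (Fin M))) = 0 := by
  have hempty : ∀ (j : Fin M) (P : Fin M → Prop), ∀ u ∈ (∅ : Finset (Fin M)), P u :=
    fun j P u hu => absurd hu (Finset.notMem_empty u)
  have expand : ∀ v : (Fin M → Bool) → ℂ,
      (∑ j : Fin M, b j • (Lop A j - Rop A j)).mulVec v
        = ∑ j : Fin M, b j • ((Lop A j).mulVec v - (Rop A j).mulVec v) := by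
    intro v
    let μ : Matrix (Fin M → Bool) (Fin M → Bool) ℂ →ₗ[ℂ] ((Fin M → Bool) → ℂ) :=
      { toFun := fun m => m.mulVec v
        map_add' := fun u w => Matrix.add_mulVec u w v
        map_smul' := fun c u => by
          show (c • u).mulVec v = (RingHom.id ℂ) c • u.mulVec v
          rw [Matrix.smul_mulVec, RingHom.id_apply] }
    show μ (∑ j : Fin M, b j • (Lop A j - Rop A j)) = _
    rw [map_sum]
    refine Finset.sum_congr rfl fun j _ => ?_
    rw [map_smul, map_sub]
    rfl
  constructor
  · intro φ hφ x hx
    let ψ : GC A →ₗ[ℂ] ((Fin M → Bool) → ℂ) :=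
      { toFun := fun z => (Stmt7Aux.rep A hsym h01 z).mulVec (stateOf ∅)
        map_add' := fun u w => by
          show (Stmt7Aux.rep A hsym h01 (u + w)).mulVec (stateOf ∅)
            = (Stmt7Aux.rep A hsym h01 u).mulVec (stateOf ∅)
              + (Stmt7Aux.rep A hsym h01 w).mulVec (stateOf ∅)
          rw [map_add, Matrix.add_mulVec]
        map_smul' := fun c u => by
          show (Stmt7Aux.rep A hsym h01 (c • u)).mulVec (stateOf ∅)
            = (RingHom.id ℂ) c • (Stmt7Aux.rep A hsym h01 u).mulVec (stateOf ∅)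
          rw [map_smul, Matrix.smul_mulVec, RingHom.id_apply] }
    have hψ : ∀ z : GC A, ψ z = (Stmt7Aux.rep A hsym h01 z).mulVec (stateOf ∅) :=
      fun z => rfl
    have key : ∀ y : GC A, φ y = ψ y := by
      intro y
      have hEq : Set.EqOn φ ψ (Stmt7Aux.SpanSet A) := by
        rintro _ ⟨l, hl, rfl⟩
        show φ (Stmt7Aux.gl A l) = ψ (Stmt7Aux.gl A l)
        have h1 : φ (Stmt7Aux.gl A l) = stateOf l.toFinset := by
          rw [← Stmt7Aux.gS_gl A l hl]; exact hφ _
        have h2 : ψ (Stmt7Aux.gl A l) = stateOf l.toFinset :=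
          Stmt7Aux.rep_gl A hsym h01 l hl
        rw [h1, h2]
      exact LinearMap.eqOn_span hEq (Stmt7Aux.mem_span_all A y)
    have e1 : ∀ j : Fin M, (Lop A j).mulVec (φ x) = ψ (hgen A j * x) := by
      intro j
      rw [key x, hψ x, hψ (hgen A j * x), Matrix.mulVec_mulVec,
        ← Stmt7Aux.rep_h A hsym h01 j, ← map_mul]
    have e2 : ∀ j : Fin M, (Rop A j).mulVec (φ x) = ψ (x * hgen A j) := by
      intro j
      rw [key x, hψ x, hψ (x * hgen A j), Matrix.mulVec_mulVec,
        ← Stmt7Aux.rep_commute_R A hsym h01 x j, ← Matrix.mulVec_mulVec,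
        Stmt7Aux.Ract A j ∅ (hempty j _),
        ← Stmt7Aux.Lact A j ∅ (hempty j _),
        Matrix.mulVec_mulVec, ← Stmt7Aux.rep_h A hsym h01 j, ← map_mul]
    have hzero : (∑ j : Fin M, b j • (hgen A j * x - x * hgen A j)) = 0 := by
      have h1 : (∑ j : Fin M, b j • (hgen A j * x - x * hgen A j))
          = (∑ j : Fin M, b j • hgen A j) * x - x * (∑ j : Fin M, b j • hgen A j) := by
        rw [Finset.sum_mul, Finset.mul_sum, ← Finset.sum_sub_distrib]
        refine Finset.sum_congr rfl fun j _ => ?_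
        rw [smul_sub, smul_mul_assoc, mul_smul_comm]
      rw [h1, hx, sub_self]
    rw [expand (φ x)]
    calc ∑ j : Fin M, b j • ((Lop A j).mulVec (φ x) - (Rop A j).mulVec (φ x))
        = ∑ j : Fin M, b j • (ψ (hgen A j * x) - ψ (x * hgen A j)) := by
          refine Finset.sum_congr rfl fun j _ => ?_
          rw [e1 j, e2 j]
      _ = ψ (∑ j : Fin M, b j • (hgen A j * x - x * hgen A j)) := by
          rw [map_sum]
          refine Finset.sum_congr rfl fun j _ => ?_
          rw [map_smul, map_sub]
      _ = ψ 0 := by rw [hzero]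
      _ = 0 := map_zero ψ
  · rw [expand (stateOf (∅ : Finset (Fin M)))]
    refine Finset.sum_eq_zero fun j _ => ?_
    rw [Stmt7Aux.Lact A j ∅ (hempty j _), Stmt7Aux.Ract A j ∅ (hempty j _),
      sub_self, smul_zero]

end
end

section
/- The operator-state correspondence conserves the norm: for any two subsets S, T ⊆ {1,…,M}, the normalized Hilbert-Schmidt inner product of the corresponding ordered products of defining-representation Pauli strings equals the inner product of the corresponding basis states, i.e. 2^{−M} Tr( (L_{a_1}⋯L_{a_n})^† (L_{b_1}⋯L_{b_m}) ) = 1 if S = T and 0 if S ≠ T, where S = {a_1<⋯<a_n} and T = {b_1<⋯<b_m}. -/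
noncomputable section

namespace Stmt8Aux

variable {M : ℕ}

/-- Flip the `k`-th bit. -/
def flip (k : Fin M) (t : Fin M → Bool) : Fin M → Bool :=
  Function.update t k (!(t k))

/-- Flip the bits indexed by the list `l`. -/
def flipL (l : List (Fin M)) (t : Fin M → Bool) : Fin M → Bool :=
  l.foldr flip t

lemma flipL_cons (k : Fin M) (l : List (Fin M)) (t : Fin M → Bool) :
    flipL (k :: l) t = flip k (flipL l t) := rfl

lemma flipL_nodup {l : List (Fin M)} (hl : l.Nodup) (t : Fin M → Bool) (i : Fin M) :
    flipL l t i = xor (decide (i ∈ l)) (t i) := by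
  induction l with
  | nil => simp [flipL]
  | cons k l ih =>
    obtain ⟨hk, hl'⟩ := List.nodup_cons.mp hl
    rw [flipL_cons, flip]
    by_cases h : i = k
    · subst h
      simp [Function.update_self, ih hl', hk]
    · simp [Function.update_of_ne h, ih hl', h]

lemma dsign (F : Finset (Fin M)) (s : Fin M → Bool) :
    (∏ j ∈ F, (if s j then (-1 : ℂ) else 1)) = 1 ∨
      (∏ j ∈ F, (if s j then (-1 : ℂ) else 1)) = -1 := by
  refine Finset.prod_induction _ (fun x => x = 1 ∨ x = -1) ?_ (Or.inl rfl) ?_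
  · rintro a b (rfl | rfl) (rfl | rfl) <;> norm_num
  · intro j _
    by_cases h : s j <;> simp [h]

lemma Lop_apply (A : Matrix (Fin M) (Fin M) ℤ) (k : Fin M) (s t : Fin M → Bool) :
    Lop A k s t = if s = flip k t then
      (∏ j ∈ Finset.univ.filter (fun j => j < k ∧ A j k = 1),
        (if t j then (-1 : ℂ) else 1)) else 0 := by
  simp [Lop, Xop, Zstring, Matrix.mul_diagonal, ite_mul, flip]
  split_ifs <;> simp_all

lemma prod_form (A : Matrix (Fin M) (Fin M) ℤ) (l : List (Fin M)) :
    ∃ ε : (Fin M → Bool) → ℂ, (∀ s, ε s = 1 ∨ ε s = -1) ∧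
      ∀ s t, (l.map (Lop A)).prod s t = if s = flipL l t then ε t else 0 := by
  induction l with
  | nil =>
    exact ⟨fun _ => 1, fun _ => Or.inl rfl, fun s t => by
      simp [flipL, Matrix.one_apply]
      split_ifs <;> simp_all⟩
  | cons k l ih =>
    obtain ⟨ε, hε, hP⟩ := ih
    refine ⟨fun t => (∏ j ∈ Finset.univ.filter (fun j => j < k ∧ A j k = 1),
        (if flipL l t j then (-1 : ℂ) else 1)) * ε t, ?_, ?_⟩
    · intro t
      rcases dsign (Finset.univ.filter (fun j => j < k ∧ A j k = 1)) (flipL l t) with h | h <;>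
        rcases hε t with h' | h' <;> simp [h, h']
    · intro s t
      rw [List.map_cons, List.prod_cons, Matrix.mul_apply]
      rw [Finset.sum_eq_single (flipL l t)]
      · rw [hP, if_pos rfl, Lop_apply, flipL_cons]
        by_cases h : s = flip k (flipL l t) <;> simp [h]
      · intro u _ hu
        rw [hP, if_neg hu, mul_zero]
      · simp

end Stmt8Aux

open Stmt8Aux in
/-- the operator-state correspondence conserves the norm: the normalized
Hilbert-Schmidt inner product of the ordered products of defining-representation Pauli
strings `L_{a_1}⋯L_{a_n}` (over `S = {a_1<⋯<a_n}`) and `L_{b_1}⋯L_{b_m}` (over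
`T = {b_1<⋯<b_m}`) is `1` if `S = T` and `0` otherwise. -/
theorem stmt8 (M : ℕ) (hM : 1 ≤ M) (A : Matrix (Fin M) (Fin M) ℤ)
    (hsym : A.IsSymm) (h01 : ∀ j k, A j k = 0 ∨ A j k = 1) (hdiag : ∀ j, A j j = 0)
    (S T : Finset (Fin M)) :
    ((2 : ℂ) ^ M)⁻¹ *
      Matrix.trace (Matrix.conjTranspose (((S.sort (· ≤ ·)).map (Lop A)).prod) *
        ((T.sort (· ≤ ·)).map (Lop A)).prod) =
      (if S = T then 1 else 0) := by
  obtain ⟨ε, hε, hP⟩ := prod_form A (S.sort (· ≤ ·))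
  obtain ⟨δ, hδ, hQ⟩ := prod_form A (T.sort (· ≤ ·))
  have h2 : ((2 : ℂ) ^ M) ≠ 0 := pow_ne_zero _ two_ne_zero
  have key : ∀ s : Fin M → Bool,
      (Matrix.conjTranspose (((S.sort (· ≤ ·)).map (Lop A)).prod) *
        ((T.sort (· ≤ ·)).map (Lop A)).prod) s s =
      if flipL (S.sort (· ≤ ·)) s = flipL (T.sort (· ≤ ·)) s
        then star (ε s) * δ s else 0 := by
    intro s
    rw [Matrix.mul_apply]
    rw [Finset.sum_eq_single (flipL (S.sort (· ≤ ·)) s)]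
    · rw [Matrix.conjTranspose_apply, hP, hQ, if_pos rfl]
      by_cases h : flipL (S.sort (· ≤ ·)) s = flipL (T.sort (· ≤ ·)) s <;> simp [h]
    · intro u _ hu
      rw [Matrix.conjTranspose_apply, hP, if_neg hu, star_zero, zero_mul]
    · simp
  by_cases hST : S = T
  · subst hST
    rw [if_pos rfl, Matrix.trace]
    have hεδ : ∀ t, ε t = δ t := by
      intro t
      have h1 := hP (flipL (S.sort (· ≤ ·)) t) t
      have h2 := hQ (flipL (S.sort (· ≤ ·)) t) t
      rw [if_pos rfl] at h1 h2
      rw [← h1, h2]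
    have : ∀ s : Fin M → Bool,
        Matrix.diag (Matrix.conjTranspose (((S.sort (· ≤ ·)).map (Lop A)).prod) *
          ((S.sort (· ≤ ·)).map (Lop A)).prod) s = (1 : ℂ) := by
      intro s
      rw [Matrix.diag_apply, key, if_pos rfl, hεδ]
      rcases hδ s with h | h <;> simp [h]
    rw [Finset.sum_congr rfl (fun s _ => this s)]
    simp [Finset.card_univ, inv_mul_cancel₀ h2]
  · rw [if_neg hST, Matrix.trace]
    have hne : ∀ s : Fin M → Bool,
        flipL (S.sort (· ≤ ·)) s ≠ flipL (T.sort (· ≤ ·)) s := by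
      intro s h
      apply hST
      ext i
      have := congrFun h i
      rw [flipL_nodup (S.sort_nodup _) s i, flipL_nodup (T.sort_nodup _) s i] at this
      have hd : decide (i ∈ S.sort (· ≤ ·)) = decide (i ∈ T.sort (· ≤ ·)) := by
        rcases s i with _ | _ <;> simpa using this
      simp only [decide_eq_decide, Finset.mem_sort] at hd
      simp [hd]
    have : ∀ s : Fin M → Bool,
        Matrix.diag (Matrix.conjTranspose (((S.sort (· ≤ ·)).map (Lop A)).prod) *
          ((T.sort (· ≤ ·)).map (Lop A)).prod) s = (0 : ℂ) := by
      intro s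
      rw [Matrix.diag_apply, key, if_neg (hne s)]
    rw [Finset.sum_congr rfl (fun s _ => this s)]
    simp

end
end

section
/- For every M ≥ 1, the dimension over 𝔽₂ of the kernel of the matrix A_M (regarded as a matrix over 𝔽₂) equals: 0 if M ≡ 0 or 2 (mod 6); 1 if M ≡ 1, 3, or 5 (mod 6); and 2 if M ≡ 4 (mod 6). Equivalently, the free-fermions-in-disguise graph-Clifford algebra with M generators has exactly this number of independent non-trivial central basis elements. -/
noncomputable section

/-- The adjacency matrix (over `𝔽₂`) of the frustration graph of the
free-fermions-in-disguise model with open boundary conditions: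
`(A_M)_{jk} = 1` iff `1 ≤ |j − k| ≤ 2`. -/
def ffdA (M : ℕ) : Matrix (Fin M) (Fin M) (ZMod 2) :=
  fun j k => if 1 ≤ ((j : ℤ) - (k : ℤ)).natAbs ∧ ((j : ℤ) - (k : ℤ)).natAbs ≤ 2 then 1 else 0

def pat (a b : ZMod 2) (n : ℕ) : ZMod 2 :=
  if n % 6 = 0 then a else if n % 6 = 1 then b else if n % 6 = 2 then b
  else if n % 6 = 3 then a + b else 0

lemma pat_mod (a b : ZMod 2) (n : ℕ) : pat a b n = pat a b (n % 6) := by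
  unfold pat
  have h0 : n % 6 % 6 = n % 6 := by omega
  rw [h0]

lemma pat_sum (a b : ZMod 2) (m : ℕ) :
    pat a b m + pat a b (m+1) + pat a b (m+3) + pat a b (m+4) = 0 := by
  have h : m % 6 < 6 := by omega
  rw [pat_mod a b m, pat_mod a b (m+1), pat_mod a b (m+3), pat_mod a b (m+4)]
  have e1 : (m+1) % 6 = (m % 6 + 1) % 6 := by omega
  have e3 : (m+3) % 6 = (m % 6 + 3) % 6 := by omega
  have e4 : (m+4) % 6 = (m % 6 + 4) % 6 := by omega
  rw [e1, e3, e4]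
  set r := m % 6 with hr
  clear_value r
  interval_cases r <;> revert a b <;> decide

lemma pat_add (a b a' b' : ZMod 2) (n : ℕ) :
    pat (a + a') (b + b') n = pat a b n + pat a' b' n := by
  unfold pat
  split_ifs <;> ring1

lemma pat_smul (c a b : ZMod 2) (n : ℕ) :
    pat (c * a) (c * b) n = c * pat a b n := by
  unfold pat
  split_ifs <;> ring1

def extv (M : ℕ) (v : Fin M → ZMod 2) (c : ℤ) : ZMod 2 :=
  if h : 0 ≤ c ∧ c < M then v ⟨c.toNat, by omega⟩ else 0

lemma extv_nat (M : ℕ) (v : Fin M → ZMod 2) (n : ℕ) (h : n < M) :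
    extv M v (n : ℤ) = v ⟨n, h⟩ := by
  unfold extv
  rw [dif_pos (by constructor <;> omega)]
  congr 1 <;> omega

lemma extv_out (M : ℕ) (v : Fin M → ZMod 2) (c : ℤ) (h : ¬ (0 ≤ c ∧ c < M)) :
    extv M v c = 0 := dif_neg h

lemma sum_indicator (M : ℕ) (v : Fin M → ZMod 2) (c : ℤ) :
    ∑ k : Fin M, (if (k : ℤ) = c then v k else 0) = extv M v c := by
  by_cases h : 0 ≤ c ∧ c < M
  · obtain ⟨h1, h2⟩ := h
    have hk : c.toNat < M := by omega
    rw [Finset.sum_eq_single (⟨c.toNat, hk⟩ : Fin M)]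
    · rw [if_pos (by simp; omega)]
      unfold extv
      rw [dif_pos ⟨h1, h2⟩]
    · intro k _ hne
      rw [if_neg]
      intro hkc
      apply hne
      apply Fin.ext
      simp at hkc ⊢
      omega
    · intro hmem; exact absurd (Finset.mem_univ _) hmem
  · rw [extv_out M v c h, Finset.sum_eq_zero]
    intro k _
    rw [if_neg]
    have := k.isLt
    intro hkc
    apply h
    constructor <;> omega

lemma row_formula (M : ℕ) (v : Fin M → ZMod 2) (j : Fin M) :
    (ffdA M).mulVec v j =
      extv M v ((j:ℕ) - 2) + extv M v ((j:ℕ) - 1) + extv M v ((j:ℕ) + 1) + extv M v ((j:ℕ) + 2) := by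
  rw [← sum_indicator, ← sum_indicator, ← sum_indicator, ← sum_indicator,
    ← Finset.sum_add_distrib, ← Finset.sum_add_distrib, ← Finset.sum_add_distrib]
  unfold Matrix.mulVec dotProduct ffdA
  apply Finset.sum_congr rfl
  intro k _
  beta_reduce
  have hj := j.isLt
  have hk := k.isLt
  by_cases hA : 1 ≤ (((j:ℕ):ℤ) - ((k:ℕ):ℤ)).natAbs ∧ (((j:ℕ):ℤ) - ((k:ℕ):ℤ)).natAbs ≤ 2
  · rw [if_pos hA, one_mul]
    split_ifs <;> first | ring1 | (exfalso; omega)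
  · rw [if_neg hA, zero_mul]
    split_ifs <;> first | ring1 | (exfalso; omega)

lemma mem_ker_iff (M : ℕ) (v : Fin M → ZMod 2) :
    v ∈ LinearMap.ker (ffdA M).mulVecLin ↔
      ∀ n : ℕ, n < M →
        extv M v ((n:ℤ) - 2) + extv M v ((n:ℤ) - 1) + extv M v ((n:ℤ) + 1)
          + extv M v ((n:ℤ) + 2) = 0 := by
  rw [LinearMap.mem_ker, Matrix.mulVecLin_apply]
  constructor
  · intro h n hn
    have := congr_fun h ⟨n, hn⟩
    rw [row_formula] at this
    exact this
  · intro h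
    funext j
    rw [Pi.zero_apply, row_formula]
    exact h j.val j.isLt

-- cancellation helpers in ZMod 2
lemma z2a (p q r x y : ZMod 2) (h1 : p+q+r+x = 0) (h2 : p+q+r+y = 0) : x = y := by
  revert p q r x y; decide

lemma z2b (x y : ZMod 2) (h : 0+0+x+y = 0) : y = x := by revert x y; decide

lemma z2c (x y z : ZMod 2) (h : 0+x+y+z = 0) : z = x + y := by revert x y z; decide

/-- every kernel vector follows the period-6 pattern -/
lemma vals (M : ℕ) (v : Fin M → ZMod 2)
    (hv : ∀ n : ℕ, n < M →
      extv M v ((n:ℤ) - 2) + extv M v ((n:ℤ) - 1) + extv M v ((n:ℤ) + 1)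
        + extv M v ((n:ℤ) + 2) = 0) :
    ∀ n : ℕ, n < M →
      extv M v (n : ℤ) = pat (extv M v ((0:ℕ) : ℤ)) (extv M v ((1:ℕ) : ℤ)) n := by
  set a := extv M v ((0:ℕ) : ℤ) with ha
  set b := extv M v ((1:ℕ) : ℤ) with hb
  intro n
  induction n using Nat.strong_induction_on with
  | _ n ih =>
    intro hn
    have h6 : n = 0 ∨ n = 1 ∨ n = 2 ∨ n = 3 ∨ 4 ≤ n := by omega
    rcases h6 with h|h|h|h|h
    · subst h; have : pat a b 0 = a := rfl
      rw [this]
    · subst h; have : pat a b 1 = b := rfl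
      rw [this]
    · subst h
      have h0 := hv 0 (by omega)
      have e1 : ((0:ℕ):ℤ) - 2 = (-2 : ℤ) := by omega
      have e2 : ((0:ℕ):ℤ) - 1 = (-1 : ℤ) := by omega
      have e3 : ((0:ℕ):ℤ) + 1 = ((1:ℕ):ℤ) := by omega
      have e4 : ((0:ℕ):ℤ) + 2 = ((2:ℕ):ℤ) := by omega
      rw [e1, e2, e3, e4, extv_out M v (-2) (by omega), extv_out M v (-1) (by omega)] at h0
      have : pat a b 2 = b := rfl
      rw [this]
      exact z2b _ _ h0
    · subst h
      have h0 := hv 1 (by omega)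
      have e1 : ((1:ℕ):ℤ) - 2 = (-1 : ℤ) := by omega
      have e2 : ((1:ℕ):ℤ) - 1 = ((0:ℕ):ℤ) := by omega
      have e3 : ((1:ℕ):ℤ) + 1 = ((2:ℕ):ℤ) := by omega
      have e4 : ((1:ℕ):ℤ) + 2 = ((3:ℕ):ℤ) := by omega
      rw [e1, e2, e3, e4, extv_out M v (-1) (by omega)] at h0
      rw [ih 2 (by omega) (by omega)] at h0
      have hp2 : pat a b 2 = b := rfl
      have hp3 : pat a b 3 = a + b := rfl
      rw [hp2] at h0
      rw [hp3]
      exact z2c _ _ _ h0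
    · have h0 := hv (n-2) (by omega)
      have e1 : ((n-2:ℕ):ℤ) - 2 = ((n-4:ℕ):ℤ) := by omega
      have e2 : ((n-2:ℕ):ℤ) - 1 = ((n-3:ℕ):ℤ) := by omega
      have e3 : ((n-2:ℕ):ℤ) + 1 = ((n-1:ℕ):ℤ) := by omega
      have e4 : ((n-2:ℕ):ℤ) + 2 = ((n:ℕ):ℤ) := by omega
      rw [e1, e2, e3, e4, ih (n-4) (by omega) (by omega), ih (n-3) (by omega) (by omega),
        ih (n-1) (by omega) (by omega)] at h0
      have hs := pat_sum a b (n-4)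
      have f1 : n-4+1 = n-3 := by omega
      have f2 : n-4+3 = n-1 := by omega
      have f3 : n-4+4 = n := by omega
      rw [f1, f2, f3] at hs
      exact z2a _ _ _ _ _ h0 hs

def psi (M : ℕ) : (ZMod 2 × ZMod 2) →ₗ[ZMod 2] (Fin M → ZMod 2) where
  toFun p := fun j => pat p.1 p.2 (j : ℕ)
  map_add' p q := by funext j; exact pat_add _ _ _ _ _
  map_smul' c p := by
    funext j
    simp only [Prod.smul_fst, Prod.smul_snd, smul_eq_mul, RingHom.id_apply, Pi.smul_apply]
    exact pat_smul _ _ _ _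

def chi (M : ℕ) : (ZMod 2 × ZMod 2) →ₗ[ZMod 2] (ZMod 2 × ZMod 2) where
  toFun p := (pat p.1 p.2 M, pat p.1 p.2 (M+1))
  map_add' p q := by
    ext <;> simp only [Prod.fst_add, Prod.snd_add] <;> exact pat_add _ _ _ _ _
  map_smul' c p := by
    ext <;>
      simp only [Prod.smul_fst, Prod.smul_snd, smul_eq_mul, RingHom.id_apply] <;>
      exact pat_smul _ _ _ _

lemma psi_injective (M : ℕ) (hM : 2 ≤ M) : Function.Injective (psi M) := by
  intro p q h
  have h0 := congr_fun h ⟨0, by omega⟩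
  have h1 := congr_fun h ⟨1, by omega⟩
  have e0 : ∀ x y : ZMod 2, pat x y ((⟨0, by omega⟩ : Fin M) : ℕ) = x := fun _ _ => rfl
  have e1 : ∀ x y : ZMod 2, pat x y ((⟨1, by omega⟩ : Fin M) : ℕ) = y := fun _ _ => rfl
  simp only [psi, LinearMap.coe_mk, AddHom.coe_mk] at h0 h1
  rw [e0, e0] at h0
  rw [e1, e1] at h1
  exact Prod.ext h0 h1

-- more ZMod 2 helpers
lemma z2d (b : ZMod 2) : (0:ZMod 2) + 0 + b + b = 0 := by revert b; decide
lemma z2e (a b : ZMod 2) : (0:ZMod 2) + a + b + (a+b) = 0 := by revert a b; decide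
lemma z2f (p q r x : ZMod 2) (h1 : p+q+r+x = 0) (h2 : x = 0) : p+q+r+0 = 0 := by
  revert p q r x; decide
lemma z2h : ∀ x : ZMod 2, 0+0+x+0 = 0 → x = 0 := by decide
lemma z2i : ∀ x : ZMod 2, 0+x+0+0 = 0 → x = 0 := by decide
lemma z2j : ∀ a b : ZMod 2, 0+a+b+0 = 0 → a + b = 0 := by decide
lemma z2k : ∀ a b : ZMod 2, b = 0 → a+b = 0 → 0+a+0+0 = 0 := by decide
lemma z2l : ∀ a b : ZMod 2, a+b=0 → 0+a+b+0 = 0 := by decide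
lemma z2g (p q x y : ZMod 2) (h1 : p+q+x+y = 0) (h2 : x = 0) (h3 : y = 0) : p+q+0+0 = 0 := by
  revert p q x y; decide

/-- main structural result -/
lemma ker_eq (M : ℕ) (hM : 2 ≤ M) :
    LinearMap.ker (ffdA M).mulVecLin = Submodule.map (psi M) (LinearMap.ker (chi M)) := by
  apply le_antisymm
  · intro v hv
    rw [mem_ker_iff] at hv
    set a := extv M v ((0:ℕ) : ℤ) with ha
    set b := extv M v ((1:ℕ) : ℤ) with hb
    clear_value a b
    have hvals := vals M v hv
    rw [← ha, ← hb] at hvals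
    -- the two constraints
    have hc1 : pat a b M = 0 ∧ pat a b (M+1) = 0 := by
      have h36 : M = 2 ∨ M = 3 ∨ 4 ≤ M := by omega
      rcases h36 with h|h|h
      · -- M = 2
        subst h
        have h0 := hv 0 (by omega)
        have h1 := hv 1 (by omega)
        have e1 : ((0:ℕ):ℤ) - 2 = (-2 : ℤ) := by omega
        have e2 : ((0:ℕ):ℤ) - 1 = (-1 : ℤ) := by omega
        have e3 : ((0:ℕ):ℤ) + 1 = ((1:ℕ):ℤ) := by omega
        have e4 : ((0:ℕ):ℤ) + 2 = (2 : ℤ) := by omega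
        rw [e1, e2, e3, e4, extv_out 2 v (-2) (by omega), extv_out 2 v (-1) (by omega),
          extv_out 2 v 2 (by omega)] at h0
        have f1 : ((1:ℕ):ℤ) - 2 = (-1 : ℤ) := by omega
        have f2 : ((1:ℕ):ℤ) - 1 = ((0:ℕ):ℤ) := by omega
        have f3 : ((1:ℕ):ℤ) + 1 = (2 : ℤ) := by omega
        have f4 : ((1:ℕ):ℤ) + 2 = (3 : ℤ) := by omega
        rw [f1, f2, f3, f4, extv_out 2 v (-1) (by omega), extv_out 2 v 2 (by omega),
          extv_out 2 v 3 (by omega)] at h1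
        rw [← hb] at h0
        rw [← ha] at h1
        have hb0 : b = 0 := z2h b h0
        have ha0 : a = 0 := z2i a h1
        rw [ha0, hb0]
        constructor <;> rfl
      · -- M = 3
        subst h
        have h1 := hv 1 (by omega)
        have f1 : ((1:ℕ):ℤ) - 2 = (-1 : ℤ) := by omega
        have f2 : ((1:ℕ):ℤ) - 1 = ((0:ℕ):ℤ) := by omega
        have f3 : ((1:ℕ):ℤ) + 1 = ((2:ℕ):ℤ) := by omega
        have f4 : ((1:ℕ):ℤ) + 2 = (3 : ℤ) := by omega
        rw [f1, f2, f3, f4, extv_out 3 v (-1) (by omega), extv_out 3 v 3 (by omega),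
          hvals 2 (by omega)] at h1
        have hp2 : pat a b 2 = b := rfl
        rw [hp2, ← ha] at h1
        have hab : a + b = 0 := z2j a b h1
        have hp3 : pat a b 3 = a + b := rfl
        have hp4 : pat a b 4 = 0 := rfl
        exact ⟨by rw [hp3]; exact hab, hp4⟩
      · -- M ≥ 4
        have h1 := hv (M-2) (by omega)
        have f1 : ((M-2:ℕ):ℤ) - 2 = ((M-4:ℕ):ℤ) := by omega
        have f2 : ((M-2:ℕ):ℤ) - 1 = ((M-3:ℕ):ℤ) := by omega
        have f3 : ((M-2:ℕ):ℤ) + 1 = ((M-1:ℕ):ℤ) := by omega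
        have f4 : ((M-2:ℕ):ℤ) + 2 = ((M:ℕ):ℤ) := by omega
        rw [f1, f2, f3, f4, extv_out M v M (by omega), hvals (M-4) (by omega),
          hvals (M-3) (by omega), hvals (M-1) (by omega)] at h1
        have hs := pat_sum a b (M-4)
        have g1 : M-4+1 = M-3 := by omega
        have g2 : M-4+3 = M-1 := by omega
        have g3 : M-4+4 = M := by omega
        rw [g1, g2, g3] at hs
        have hM0 : pat a b M = 0 := (z2a _ _ _ _ _ h1 hs).symm
        -- now row M-1
        have h2 := hv (M-1) (by omega)
        have k1 : ((M-1:ℕ):ℤ) - 2 = ((M-3:ℕ):ℤ) := by omega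
        have k2 : ((M-1:ℕ):ℤ) - 1 = ((M-2:ℕ):ℤ) := by omega
        have k3 : ((M-1:ℕ):ℤ) + 1 = ((M:ℕ):ℤ) := by omega
        have k4 : ((M-1:ℕ):ℤ) + 2 = ((M+1:ℕ):ℤ) := by omega
        rw [k1, k2, k3, k4, extv_out M v M (by omega), extv_out M v (((M+1:ℕ)):ℤ) (by push_cast; omega),
          hvals (M-3) (by omega), hvals (M-2) (by omega)] at h2
        have hs2 := pat_sum a b (M-3)
        have g1' : M-3+1 = M-2 := by omega
        have g2' : M-3+3 = M := by omega
        have g3' : M-3+4 = M+1 := by omega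
        rw [g1', g2', g3'] at hs2
        -- h2 : pat(M-3)+pat(M-2)+0+0 = 0 ; hs2 : pat(M-3)+pat(M-2)+pat M+pat(M+1) = 0
        have : pat a b (M+1) = 0 := by
          revert h2 hs2 hM0
          generalize pat a b (M-3) = p
          generalize pat a b (M-2) = q
          generalize pat a b M = x
          generalize pat a b (M+1) = y
          revert p q x y; decide
        exact ⟨hM0, this⟩
    refine Submodule.mem_map.mpr ⟨(a, b), LinearMap.mem_ker.mpr (Prod.ext hc1.1 hc1.2), ?_⟩
    funext j
    have h := hvals j.val j.isLt
    rw [extv_nat M v j.val j.isLt] at h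
    exact h.symm
  · rintro v ⟨⟨a, b⟩, hK, rfl⟩
    have hK' : chi M (a, b) = 0 := hK
    have hKa : pat a b M = 0 := congr_arg Prod.fst hK'
    have hKb : pat a b (M+1) = 0 := congr_arg Prod.snd hK'
    rw [mem_ker_iff]
    intro n hn
    set w : Fin M → ZMod 2 := psi M (a, b) with hw
    have hwnat : ∀ m : ℕ, (hm : m < M) → extv M w (m : ℤ) = pat a b m := by
      intro m hm
      rw [extv_nat M w m hm]
      rfl
    have hcase : n = 0 ∨ n = 1 ∨ (2 ≤ n ∧ n + 2 < M) ∨ (2 ≤ n ∧ n + 2 = M) ∨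
        (2 ≤ n ∧ n + 1 = M) := by omega
    rcases hcase with h|h|⟨h2, h3⟩|⟨h2, h3⟩|⟨h2, h3⟩
    · subst h
      have e1 : ((0:ℕ):ℤ) - 2 = (-2 : ℤ) := by omega
      have e2 : ((0:ℕ):ℤ) - 1 = (-1 : ℤ) := by omega
      rw [e1, e2, extv_out M w (-2) (by omega), extv_out M w (-1) (by omega)]
      by_cases hM2 : M = 2
      · subst hM2
        have e3 : ((0:ℕ):ℤ) + 1 = ((1:ℕ):ℤ) := by omega
        have e4 : ((0:ℕ):ℤ) + 2 = (2:ℤ) := by omega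
        rw [e3, e4, extv_out 2 w 2 (by omega), hwnat 1 (by omega)]
        have : pat a b 2 = b := rfl
        rw [this] at hKa
        rw [show pat a b 1 = b from rfl, hKa]
        decide
      · have e3 : ((0:ℕ):ℤ) + 1 = ((1:ℕ):ℤ) := by omega
        have e4 : ((0:ℕ):ℤ) + 2 = ((2:ℕ):ℤ) := by omega
        rw [e3, e4, hwnat 1 (by omega), hwnat 2 (by omega)]
        rw [show pat a b 1 = b from rfl, show pat a b 2 = b from rfl]
        exact z2d b
    · subst h
      have e1 : ((1:ℕ):ℤ) - 2 = (-1 : ℤ) := by omega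
      have e2 : ((1:ℕ):ℤ) - 1 = ((0:ℕ):ℤ) := by omega
      rw [e1, e2, extv_out M w (-1) (by omega), hwnat 0 (by omega),
        show pat a b 0 = a from rfl]
      have hM23 : M = 2 ∨ M = 3 ∨ 4 ≤ M := by omega
      rcases hM23 with h|h|h
      · subst h
        have e3 : ((1:ℕ):ℤ) + 1 = (2:ℤ) := by omega
        have e4 : ((1:ℕ):ℤ) + 2 = (3:ℤ) := by omega
        rw [e3, e4, extv_out 2 w 2 (by omega), extv_out 2 w 3 (by omega)]
        have hx2 : b = 0 := by rw [show pat a b 2 = b from rfl] at hKa; exact hKa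
        have hx3 : a + b = 0 := by rw [show pat a b 3 = a+b from rfl] at hKb; exact hKb
        exact z2k a b hx2 hx3
      · subst h
        have e3 : ((1:ℕ):ℤ) + 1 = ((2:ℕ):ℤ) := by omega
        have e4 : ((1:ℕ):ℤ) + 2 = (3:ℤ) := by omega
        rw [e3, e4, extv_out 3 w 3 (by omega), hwnat 2 (by omega),
          show pat a b 2 = b from rfl]
        have hx3 : a + b = 0 := by rw [show pat a b 3 = a+b from rfl] at hKa; exact hKa
        exact z2l a b hx3
      · have e3 : ((1:ℕ):ℤ) + 1 = ((2:ℕ):ℤ) := by omega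
        have e4 : ((1:ℕ):ℤ) + 2 = ((3:ℕ):ℤ) := by omega
        rw [e3, e4, hwnat 2 (by omega), hwnat 3 (by omega),
          show pat a b 2 = b from rfl, show pat a b 3 = a+b from rfl]
        exact z2e a b
    · -- interior
      have e1 : ((n:ℕ):ℤ) - 2 = ((n-2:ℕ):ℤ) := by omega
      have e2 : ((n:ℕ):ℤ) - 1 = ((n-1:ℕ):ℤ) := by omega
      have e3 : ((n:ℕ):ℤ) + 1 = ((n+1:ℕ):ℤ) := by omega
      have e4 : ((n:ℕ):ℤ) + 2 = ((n+2:ℕ):ℤ) := by omega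
      rw [e1, e2, e3, e4, hwnat (n-2) (by omega), hwnat (n-1) (by omega),
        hwnat (n+1) (by omega), hwnat (n+2) (by omega)]
      have hs := pat_sum a b (n-2)
      have g1 : n-2+1 = n-1 := by omega
      have g2 : n-2+3 = n+1 := by omega
      have g3 : n-2+4 = n+2 := by omega
      rw [g1, g2, g3] at hs
      exact hs
    · -- n = M - 2
      have e1 : ((n:ℕ):ℤ) - 2 = ((M-4:ℕ):ℤ) := by omega
      have e2 : ((n:ℕ):ℤ) - 1 = ((M-3:ℕ):ℤ) := by omega
      have e3 : ((n:ℕ):ℤ) + 1 = ((M-1:ℕ):ℤ) := by omega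
      have e4 : ((n:ℕ):ℤ) + 2 = ((M:ℕ):ℤ) := by omega
      rw [e1, e2, e3, e4, extv_out M w M (by omega), hwnat (M-4) (by omega),
        hwnat (M-3) (by omega), hwnat (M-1) (by omega)]
      have hs := pat_sum a b (M-4)
      have g1 : M-4+1 = M-3 := by omega
      have g2 : M-4+3 = M-1 := by omega
      have g3 : M-4+4 = M := by omega
      rw [g1, g2, g3] at hs
      exact z2f _ _ _ _ hs hKa
    · -- n = M - 1
      have e1 : ((n:ℕ):ℤ) - 2 = ((M-3:ℕ):ℤ) := by omega
      have e2 : ((n:ℕ):ℤ) - 1 = ((M-2:ℕ):ℤ) := by omega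
      have e3 : ((n:ℕ):ℤ) + 1 = ((M:ℕ):ℤ) := by omega
      have e4 : ((n:ℕ):ℤ) + 2 = ((M+1:ℕ):ℤ) := by omega
      rw [e1, e2, e3, e4, extv_out M w M (by omega), extv_out M w (((M+1:ℕ)):ℤ) (by push_cast; omega),
        hwnat (M-3) (by omega), hwnat (M-2) (by omega)]
      have hs := pat_sum a b (M-3)
      have g1 : M-3+1 = M-2 := by omega
      have g2 : M-3+3 = M := by omega
      have g3 : M-3+4 = M+1 := by omega
      rw [g1, g2, g3] at hs
      exact z2g _ _ _ _ hs hKa hKb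

lemma z2m : ∀ x y : ZMod 2, y = 0 → x + y = 0 → x = 0 := by decide
lemma z2n : ∀ x y : ZMod 2, x + y = 0 → y = x := by decide

lemma pat_M (x y : ZMod 2) (M r : ℕ) (hr : M % 6 = r) : pat x y M = pat x y r := by
  rw [pat_mod, hr]

/-- for every `M ≥ 1`, the `𝔽₂`-dimension of the kernel of `A_M`
(equivalently, the number of independent non-trivial central basis elements of the
free-fermions-in-disguise graph-Clifford algebra with `M` generators) is `0` if
`M ≡ 0, 2 (mod 6)`, `2` if `M ≡ 4 (mod 6)`, and `1` if `M ≡ 1, 3, 5 (mod 6)`. -/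
theorem stmt10 (M : ℕ) (hM : 1 ≤ M) :
    Module.finrank (ZMod 2) (LinearMap.ker (ffdA M).mulVecLin) =
      (if M % 6 = 0 ∨ M % 6 = 2 then 0 else if M % 6 = 4 then 2 else 1) := by

  by_cases hM1 : M = 1
  · subst hM1
    have hA : ffdA 1 = 0 := by
      funext j k
      fin_cases j; fin_cases k
      simp [ffdA]
    rw [hA]
    norm_num
    rw [Matrix.mulVecLin_zero, LinearMap.ker_zero, finrank_top]
    simp
  · have hM2 : 2 ≤ M := by omega
    rw [ker_eq M hM2]
    have hinj := psi_injective M hM2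
    rw [← LinearEquiv.finrank_eq (Submodule.equivMapOfInjective (psi M) hinj
      (LinearMap.ker (chi M)))]
    have h6 : M % 6 = 0 ∨ M % 6 = 1 ∨ M % 6 = 2 ∨ M % 6 = 3 ∨ M % 6 = 4 ∨ M % 6 = 5 := by
      omega
    rcases h6 with hr|hr|hr|hr|hr|hr
    · -- r = 0 : kernel ⊥
      rw [if_pos (Or.inl hr)]
      have hK : LinearMap.ker (chi M) = ⊥ := by
        rw [eq_bot_iff]
        rintro ⟨x, y⟩ hxy
        have h := LinearMap.mem_ker.mp hxy
        have hx : pat x y M = 0 := congr_arg Prod.fst h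
        have hy : pat x y (M+1) = 0 := congr_arg Prod.snd h
        rw [pat_M x y M 0 hr] at hx
        rw [pat_M x y (M+1) 1 (by omega)] at hy
        rw [show pat x y 0 = x from rfl] at hx
        rw [show pat x y 1 = y from rfl] at hy
        rw [Submodule.mem_bot, Prod.ext_iff]
        exact ⟨hx, hy⟩
      rw [hK, finrank_bot]
    · -- r = 1 : span (1,0)
      rw [if_neg (by omega), if_neg (by omega)]
      have hK : LinearMap.ker (chi M) = Submodule.span (ZMod 2) {((1:ZMod 2), (0:ZMod 2))} := by
        apply le_antisymm
        · rintro ⟨x, y⟩ hxy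
          have h := LinearMap.mem_ker.mp hxy
          have hx : pat x y M = 0 := congr_arg Prod.fst h
          rw [pat_M x y M 1 hr, show pat x y 1 = y from rfl] at hx
          rw [Submodule.mem_span_singleton]
          exact ⟨x, by simp [Prod.ext_iff, hx]⟩
        · rw [Submodule.span_le]
          rintro p hp
          rw [Set.mem_singleton_iff] at hp
          subst hp
          rw [SetLike.mem_coe, LinearMap.mem_ker]
          have h1 : pat (1:ZMod 2) (0:ZMod 2) M = 0 := by
            rw [pat_M _ _ M 1 hr]; rfl
          have h2 : pat (1:ZMod 2) (0:ZMod 2) (M+1) = 0 := by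
            rw [pat_M _ _ (M+1) 2 (by omega)]; rfl
          exact Prod.ext h1 h2
      rw [hK]
      apply finrank_span_singleton
      decide
    · -- r = 2 : kernel ⊥
      rw [if_pos (Or.inr hr)]
      have hK : LinearMap.ker (chi M) = ⊥ := by
        rw [eq_bot_iff]
        rintro ⟨x, y⟩ hxy
        have h := LinearMap.mem_ker.mp hxy
        have hx : pat x y M = 0 := congr_arg Prod.fst h
        have hy : pat x y (M+1) = 0 := congr_arg Prod.snd h
        rw [pat_M x y M 2 hr, show pat x y 2 = y from rfl] at hx
        rw [pat_M x y (M+1) 3 (by omega), show pat x y 3 = x + y from rfl] at hy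
        rw [Submodule.mem_bot, Prod.ext_iff]
        exact ⟨z2m x y hx hy, hx⟩
      rw [hK, finrank_bot]
    · -- r = 3 : span (1,1)
      rw [if_neg (by omega), if_neg (by omega)]
      have hK : LinearMap.ker (chi M) = Submodule.span (ZMod 2) {((1:ZMod 2), (1:ZMod 2))} := by
        apply le_antisymm
        · rintro ⟨x, y⟩ hxy
          have h := LinearMap.mem_ker.mp hxy
          have hx : pat x y M = 0 := congr_arg Prod.fst h
          rw [pat_M x y M 3 hr, show pat x y 3 = x + y from rfl] at hx
          have hyx : y = x := z2n x y hx
          rw [Submodule.mem_span_singleton]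
          exact ⟨x, by simp [Prod.ext_iff, hyx]⟩
        · rw [Submodule.span_le]
          rintro p hp
          rw [Set.mem_singleton_iff] at hp
          subst hp
          rw [SetLike.mem_coe, LinearMap.mem_ker]
          have h1 : pat (1:ZMod 2) (1:ZMod 2) M = 0 := by
            rw [pat_M _ _ M 3 hr]; rfl
          have h2 : pat (1:ZMod 2) (1:ZMod 2) (M+1) = 0 := by
            rw [pat_M _ _ (M+1) 4 (by omega)]; rfl
          exact Prod.ext h1 h2
      rw [hK]
      apply finrank_span_singleton
      decide
    · -- r = 4 : everything
      rw [if_neg (by omega), if_pos hr]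
      have hK : LinearMap.ker (chi M) = ⊤ := by
        rw [eq_top_iff]
        rintro ⟨x, y⟩ _
        rw [LinearMap.mem_ker]
        have h1 : pat x y M = 0 := by rw [pat_M x y M 4 hr]; rfl
        have h2 : pat x y (M+1) = 0 := by rw [pat_M x y (M+1) 5 (by omega)]; rfl
        exact Prod.ext h1 h2
      rw [hK, finrank_top]
      rw [Module.finrank_prod, Module.finrank_self]
    · -- r = 5 : span (0,1)
      rw [if_neg (by omega), if_neg (by omega)]
      have hK : LinearMap.ker (chi M) = Submodule.span (ZMod 2) {((0:ZMod 2), (1:ZMod 2))} := by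
        apply le_antisymm
        · rintro ⟨x, y⟩ hxy
          have h := LinearMap.mem_ker.mp hxy
          have hy : pat x y (M+1) = 0 := congr_arg Prod.snd h
          rw [pat_M x y (M+1) 0 (by omega), show pat x y 0 = x from rfl] at hy
          rw [Submodule.mem_span_singleton]
          exact ⟨y, by simp [Prod.ext_iff, hy]⟩
        · rw [Submodule.span_le]
          rintro p hp
          rw [Set.mem_singleton_iff] at hp
          subst hp
          rw [SetLike.mem_coe, LinearMap.mem_ker]
          have h1 : pat (0:ZMod 2) (1:ZMod 2) M = 0 := by
            rw [pat_M _ _ M 5 hr]; rfl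
          have h2 : pat (0:ZMod 2) (1:ZMod 2) (M+1) = 0 := by
            rw [pat_M _ _ (M+1) 0 (by omega)]; rfl
          exact Prod.ext h1 h2
      rw [hK]
      apply finrank_span_singleton
      decide


end
end

section
/- The following vectors lie in the kernel of A_M over 𝔽₂: (i) if M ≡ 1 (mod 3), the indicator vector of {1, 4, 7, …, M}; (ii) if M ≡ 3 (mod 6), the indicator vector of the union of triples {6i+1, 6i+2, 6i+3} for 0 ≤ i ≤ (M−3)/6; (iii) if M ≡ 5 (mod 6), the indicator vector of the union of triples {6i+2, 6i+3, 6i+4} for 0 ≤ i ≤ (M−5)/6. -/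
noncomputable section

private lemma sum_ite_int (M : ℕ) (q : ℤ → ZMod 2)
    (hq : ∀ n : ℤ, n < 0 ∨ (M : ℤ) ≤ n → q n = 0) (c : ℤ) :
    ∑ k : Fin M, (if ((k : ℕ) : ℤ) = c then q ((k : ℕ) : ℤ) else 0) = q c := by
  by_cases hc : 0 ≤ c ∧ c < M
  · have hk : c.toNat < M := by omega
    rw [Finset.sum_eq_single (⟨c.toNat, hk⟩ : Fin M)]
    · have hcc : (((⟨c.toNat, hk⟩ : Fin M) : ℕ) : ℤ) = c := by
        have h0 : ((⟨c.toNat, hk⟩ : Fin M) : ℕ) = c.toNat := rfl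
        rw [h0]
        omega
      rw [if_pos hcc, hcc]
    · intro b _ hb
      refine if_neg (fun h => hb (Fin.ext ?_))
      show (b : ℕ) = c.toNat
      omega
    · intro h; exact absurd (Finset.mem_univ _) h
  · rw [hq c (by omega)]
    apply Finset.sum_eq_zero
    intro k _
    apply if_neg
    intro h
    have := k.isLt
    omega

private lemma rowA (M : ℕ) (v : Fin M → ZMod 2) (q : ℤ → ZMod 2)
    (hvq : ∀ k : Fin M, v k = q ((k : ℕ) : ℤ))
    (hq : ∀ n : ℤ, n < 0 ∨ (M : ℤ) ≤ n → q n = 0) (j : Fin M) :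
    (ffdA M).mulVec v j =
      q (((j : ℕ) : ℤ) - 2) + q (((j : ℕ) : ℤ) - 1) +
      q (((j : ℕ) : ℤ) + 1) + q (((j : ℕ) : ℤ) + 2) := by
  classical
  simp only [Matrix.mulVec, dotProduct, ffdA]
  have key : ∀ k : Fin M,
      (if 1 ≤ (((j : ℕ) : ℤ) - ((k : ℕ) : ℤ)).natAbs ∧
          (((j : ℕ) : ℤ) - ((k : ℕ) : ℤ)).natAbs ≤ 2 then (1 : ZMod 2) else 0) * v k =
      (if ((k : ℕ) : ℤ) = ((j : ℕ) : ℤ) - 2 then q ((k : ℕ) : ℤ) else 0) +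
      (if ((k : ℕ) : ℤ) = ((j : ℕ) : ℤ) - 1 then q ((k : ℕ) : ℤ) else 0) +
      (if ((k : ℕ) : ℤ) = ((j : ℕ) : ℤ) + 1 then q ((k : ℕ) : ℤ) else 0) +
      (if ((k : ℕ) : ℤ) = ((j : ℕ) : ℤ) + 2 then q ((k : ℕ) : ℤ) else 0) := by
    intro k
    rw [hvq k]
    split_ifs <;> first | (exfalso; omega) | simp
  rw [Finset.sum_congr rfl (fun k _ => key k), Finset.sum_add_distrib,
    Finset.sum_add_distrib, Finset.sum_add_distrib,
    sum_ite_int M q hq, sum_ite_int M q hq, sum_ite_int M q hq, sum_ite_int M q hq]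

/-- kernel vectors of `A_M` over `𝔽₂` (sites of the chain are 1-indexed
in the paper, so the 0-indexed site `i` corresponds to the paper's site `i+1`):
(i) if `M ≡ 1 (mod 3)`, the indicator vector of `{1, 4, 7, …, M}` (0-indexed: `i % 3 = 0`);
(ii) if `M ≡ 3 (mod 6)`, the indicator vector of the triples `{6i+1, 6i+2, 6i+3}`
(0-indexed: `i % 6 ≤ 2`);
(iii) if `M ≡ 5 (mod 6)`, the indicator vector of the triples `{6i+2, 6i+3, 6i+4}`
(0-indexed: `i % 6 ∈ {1,2,3}`). -/
theorem stmt11 (M : ℕ) (hM : 1 ≤ M) :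
    (M % 3 = 1 →
      (ffdA M).mulVec (fun i => if (i : ℕ) % 3 = 0 then 1 else 0) = 0) ∧
    (M % 6 = 3 →
      (ffdA M).mulVec (fun i => if (i : ℕ) % 6 ≤ 2 then 1 else 0) = 0) ∧
    (M % 6 = 5 →
      (ffdA M).mulVec
        (fun i => if (i : ℕ) % 6 = 1 ∨ (i : ℕ) % 6 = 2 ∨ (i : ℕ) % 6 = 3 then 1 else 0) = 0) := by
  refine ⟨fun h1 => ?_, fun h2 => ?_, fun h3 => ?_⟩
  · funext j
    have hj := j.isLt
    rw [rowA M _ (fun n => if 0 ≤ n ∧ n < (M : ℤ) ∧ n % 3 = 0 then 1 else 0)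
      (fun k => by have := k.isLt; split_ifs <;> first | rfl | (exfalso; omega))
      (fun n hn => if_neg (by omega)) j]
    simp only [Pi.zero_apply]
    split_ifs <;> first | decide | (exfalso; omega)
  · funext j
    have hj := j.isLt
    rw [rowA M _ (fun n => if 0 ≤ n ∧ n < (M : ℤ) ∧ n % 6 ≤ 2 then 1 else 0)
      (fun k => by have := k.isLt; split_ifs <;> first | rfl | (exfalso; omega))
      (fun n hn => if_neg (by omega)) j]
    simp only [Pi.zero_apply]
    split_ifs <;> first | decide | (exfalso; omega)
  · funext j
    have hj := j.isLt
    rw [rowA M _ (fun n => if 0 ≤ n ∧ n < (M : ℤ) ∧ (n % 6 = 1 ∨ n % 6 = 2 ∨ n % 6 = 3)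
        then 1 else 0)
      (fun k => by have := k.isLt; split_ifs <;> first | rfl | (exfalso; omega))
      (fun n hn => if_neg (by omega)) j]
    simp only [Pi.zero_apply]
    split_ifs <;> first | decide | (exfalso; omega)


end
end

section
/- Let P_M be the M×M matrix over 𝔽₂ with (P_M)_{jk} = 1 iff |j−k| = 1 (the adjacency matrix of the path graph, i.e. of the Ising/XY graph-Clifford algebra with open boundary conditions). If M is even then the kernel of P_M over 𝔽₂ is trivial; if M is odd then the kernel of P_M is one-dimensional, spanned by the indicator vector of the odd positions {1, 3, 5, …, M}. -/
noncomputable section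

/-- The adjacency matrix (over `𝔽₂`) of the path graph, i.e. of the Ising/XY
graph-Clifford algebra with open boundary conditions: `(P_M)_{jk} = 1` iff `|j−k| = 1`. -/
def pathA (M : ℕ) : Matrix (Fin M) (Fin M) (ZMod 2) :=
  fun j k => if ((j : ℤ) - (k : ℤ)).natAbs = 1 then 1 else 0

lemma pathA_apply (M : ℕ) (j k : Fin M) :
    pathA M j k = (if (k:ℕ) = (j:ℕ)+1 then 1 else 0) + (if (k:ℕ)+1 = (j:ℕ) then 1 else 0) := by
  unfold pathA
  have hj := j.isLt; have hk := k.isLt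
  split_ifs with h1 h2 h3 h4 h5 <;> simp_all <;> omega

lemma sum_ite_val (M c : ℕ) (v : Fin M → ZMod 2) :
    (∑ k : Fin M, if (k:ℕ) = c then v k else 0) = if h : c < M then v ⟨c, h⟩ else 0 := by
  split_ifs with h
  · rw [Finset.sum_eq_single ⟨c, h⟩]
    · simp
    · intro b _ hb
      simp only [ite_eq_right_iff]
      intro hbc; exact absurd (Fin.ext hbc) hb
    · simp
  · apply Finset.sum_eq_zero
    intro k _
    simp only [ite_eq_right_iff]
    intro hk; exact absurd (hk ▸ k.isLt) h

lemma mulVec_pathA (M : ℕ) (v : Fin M → ZMod 2) (j : Fin M) :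
    (pathA M).mulVec v j =
      (if h : (j:ℕ)+1 < M then v ⟨(j:ℕ)+1, h⟩ else 0) +
      (if h : 0 < (j:ℕ) then v ⟨(j:ℕ)-1, by omega⟩ else 0) := by
  unfold Matrix.mulVec dotProduct
  simp only [pathA_apply, add_mul, ite_mul, one_mul, zero_mul, Finset.sum_add_distrib]
  congr 1
  · exact sum_ite_val M ((j:ℕ)+1) v
  · by_cases hj : 0 < (j:ℕ)
    · have : ∀ k : Fin M, (if (k:ℕ)+1 = (j:ℕ) then v k else 0) = (if (k:ℕ) = (j:ℕ)-1 then v k else 0) := by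
        intro k; congr 1; simp only [eq_iff_iff]; omega
      simp only [this, sum_ite_val, hj, dif_pos]
      rw [dif_pos (by omega : (j:ℕ)-1 < M)]
    · rw [dif_neg hj]
      apply Finset.sum_eq_zero
      intro k _
      rw [if_neg (by omega)]

lemma vals_s12 (M : ℕ) (hM : 1 ≤ M) (v : Fin M → ZMod 2)
    (hv : ∀ j : Fin M, (pathA M).mulVec v j = 0) :
    ∀ n (h : n < M), v ⟨n, h⟩ = if n % 2 = 0 then v ⟨0, by omega⟩ else 0 := by
  intro n
  induction n using Nat.strong_induction_on with
  | _ n ih =>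
    intro h
    match n, h with
    | 0, h => simp
    | 1, h =>
      have := hv ⟨0, by omega⟩
      rw [mulVec_pathA] at this
      simp only [dif_neg (lt_irrefl 0)] at this
      rw [dif_pos h] at this
      simpa using this
    | (n+2), h =>
      have := hv ⟨n+1, by omega⟩
      rw [mulVec_pathA] at this
      simp only [dif_pos (Nat.succ_pos n)] at this
      rw [dif_pos h] at this
      have h2 : v ⟨n+2, h⟩ = v ⟨n, by omega⟩ := by
        have := add_eq_zero_iff_eq_neg.mp this
        simpa [neg_eq_iff_add_eq_zero, CharTwo.neg_eq] using this
      rw [h2, ih n (by omega) (by omega)]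
      congr 1
      simp only [eq_iff_iff]; omega

lemma w_mem (M : ℕ) (hM : M % 2 = 1) (j : Fin M) :
    (pathA M).mulVec (fun i => if (i : ℕ) % 2 = 0 then 1 else 0 : Fin M → ZMod 2) j = 0 := by
  rw [mulVec_pathA]
  simp only [Fin.val_mk]
  have hjlt := j.isLt
  rcases Nat.even_or_odd (j:ℕ) with he | ho
  · have h1 : (j:ℕ) % 2 = 0 := Nat.even_iff.mp he
    split_ifs <;> first | decide | omega
  · have h1 : (j:ℕ) % 2 = 1 := Nat.odd_iff.mp ho
    split_ifs <;> first | decide | omega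

/-- if `M` is even the kernel of `P_M` over `𝔽₂` is trivial; if `M` is
odd the kernel is one-dimensional, spanned by the indicator vector of the odd
(1-indexed) positions `{1, 3, …, M}`, i.e. of the 0-indexed positions with `i % 2 = 0`. -/
theorem stmt12 (M : ℕ) (hM : 1 ≤ M) :
    (M % 2 = 0 → LinearMap.ker (pathA M).mulVecLin = ⊥) ∧
    (M % 2 = 1 →
      LinearMap.ker (pathA M).mulVecLin =
        Submodule.span (ZMod 2)
          {(fun i => if (i : ℕ) % 2 = 0 then 1 else 0 : Fin M → ZMod 2)} ∧
      Module.finrank (ZMod 2) (LinearMap.ker (pathA M).mulVecLin) = 1) := by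
  set w : Fin M → ZMod 2 := (fun i => if (i : ℕ) % 2 = 0 then 1 else 0) with hw
  constructor
  · intro hM0
    rw [Submodule.eq_bot_iff]
    intro v hv
    rw [LinearMap.mem_ker, Matrix.mulVecLin_apply] at hv
    have hv' : ∀ j : Fin M, (pathA M).mulVec v j = 0 := fun j => congrFun hv j
    have hM2 : 2 ≤ M := by omega
    -- v at 0 is zero: use equation at M-1
    have hlast := hv' ⟨M-1, by omega⟩
    rw [mulVec_pathA] at hlast
    rw [dif_neg (by simp only [Fin.val_mk]; omega), dif_pos (by simp only [Fin.val_mk]; omega)] at hlast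
    simp only [Fin.val_mk, zero_add] at hlast
    have h02 : v ⟨M-1-1, by omega⟩ = v ⟨0, by omega⟩ := by
      rw [vals_s12 M hM v hv' (M-1-1) (by omega), if_pos (by omega)]
    have h0 : v ⟨0, by omega⟩ = 0 := h02 ▸ hlast
    funext i
    have := vals_s12 M hM v hv' i i.isLt
    simp only [Fin.eta] at this
    rw [this, h0]
    simp
  · intro hM1
    have hker : LinearMap.ker (pathA M).mulVecLin = Submodule.span (ZMod 2) {w} := by
      apply le_antisymm
      · intro v hv
        rw [LinearMap.mem_ker, Matrix.mulVecLin_apply] at hv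
        have hv' : ∀ j : Fin M, (pathA M).mulVec v j = 0 := fun j => congrFun hv j
        rw [Submodule.mem_span_singleton]
        refine ⟨v ⟨0, by omega⟩, ?_⟩
        funext i
        have := vals_s12 M hM v hv' i i.isLt
        simp only [Fin.eta] at this
        rw [this, hw]
        simp only [Pi.smul_apply, smul_eq_mul]
        split_ifs <;> ring
      · rw [Submodule.span_singleton_le_iff_mem, LinearMap.mem_ker, Matrix.mulVecLin_apply]
        funext j
        exact w_mem M hM1 j
    refine ⟨hker, ?_⟩
    rw [hker, finrank_span_singleton]
    intro hw0
    have : w ⟨0, by omega⟩ = 0 := by rw [hw0]; rfl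
    rw [hw] at this
    simp at this

end
end

section
/- For every M ≥ 1, the first standard basis vector e_1 ∈ 𝔽₂^M lies in the column space of A_M over 𝔽₂ if and only if M ≡ 0, 2, or 5 (mod 6). Equivalently, an edge operator whose commutation pattern is to anticommute with exactly one boundary generator of the free-fermions-in-disguise algebra can be chosen inside the algebra itself precisely when M ≡ 0, 2, or 5 (mod 6). -/
noncomputable section

open Matrix

/-- Extension of a vector on `Fin M` to `ℤ` by zero. -/
def gv (M : ℕ) (v : Fin M → ZMod 2) (i : ℤ) : ZMod 2 :=
  if h : 0 ≤ i ∧ i < M then v ⟨i.toNat, by omega⟩ else 0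

lemma sum_ind (M : ℕ) (v : Fin M → ZMod 2) (i : ℤ) :
    (∑ k : Fin M, if (k : ℤ) = i then v k else 0) = gv M v i := by
  unfold gv
  split_ifs with h
  · rw [Finset.sum_eq_single (⟨i.toNat, by omega⟩ : Fin M)]
    · rw [if_pos]
      simp [Int.toNat_of_nonneg h.1]
    · intro b _ hb
      apply if_neg
      intro hbi
      have hv : b.val = i.toNat := by omega
      exact hb (Fin.ext hv)
    · intro h'
      exact absurd (Finset.mem_univ _) h'
  · apply Finset.sum_eq_zero
    intro k _
    rw [if_neg]
    have := k.isLt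
    omega

lemma ffd_mulVec (M : ℕ) (v : Fin M → ZMod 2) (j : Fin M) :
    (ffdA M).mulVec v j =
      gv M v ((j : ℤ) - 2) + gv M v ((j : ℤ) - 1) + gv M v ((j : ℤ) + 1) +
        gv M v ((j : ℤ) + 2) := by
  have hA : ∀ k : Fin M, ffdA M j k * v k =
      (if (k : ℤ) = (j : ℤ) - 2 then v k else 0) +
      (if (k : ℤ) = (j : ℤ) - 1 then v k else 0) +
      (if (k : ℤ) = (j : ℤ) + 1 then v k else 0) +
      (if (k : ℤ) = (j : ℤ) + 2 then v k else 0) := by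
    intro k
    unfold ffdA
    split_ifs <;> first | omega | ring
  show (∑ k : Fin M, ffdA M j k * v k) = _
  simp only [hA, Finset.sum_add_distrib, sum_ind]

lemma transpose_ffdA (M : ℕ) : Matrix.transpose (ffdA M) = ffdA M := by
  ext j k
  unfold ffdA Matrix.transpose
  simp only [Matrix.of_apply]
  congr 1
  simp only [eq_iff_iff]
  omega

/-- If there is a kernel vector of `A_M` with first coordinate `1`, then `e_1`
is not in the column space. -/
lemma no_sol (M : ℕ) (hM : 0 < M) (y : Fin M → ZMod 2)
    (hy0 : y ⟨0, hM⟩ = 1) (hker : (ffdA M).mulVec y = 0) :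
    Pi.single (⟨0, hM⟩ : Fin M) (1 : ZMod 2) ∉ LinearMap.range (ffdA M).mulVecLin := by
  rintro ⟨x, hx⟩
  rw [Matrix.mulVecLin_apply] at hx
  have h1 : y ⬝ᵥ (ffdA M).mulVec x = 1 := by
    rw [hx, dotProduct_single, hy0, one_mul]
  rw [Matrix.dotProduct_mulVec] at h1
  have h2 : Matrix.vecMul y (ffdA M) = 0 := by
    rw [← transpose_ffdA M, Matrix.vecMul_transpose, hker]
  rw [h2, zero_dotProduct] at h1
  exact one_ne_zero h1.symm

lemma ker1 (M : ℕ) (h : M % 3 = 1) :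
    (ffdA M).mulVec (fun k : Fin M => if (k : ℕ) % 3 = 0 then 1 else 0) = 0 := by
  funext j
  rw [ffd_mulVec]
  obtain ⟨n, hn⟩ := j
  simp only [gv, Pi.zero_apply]
  split_ifs <;> first | decide | omega

lemma ker3 (M : ℕ) (h : M % 6 = 3) :
    (ffdA M).mulVec (fun k : Fin M => if (k : ℕ) % 6 < 3 then 1 else 0) = 0 := by
  funext j
  rw [ffd_mulVec]
  obtain ⟨n, hn⟩ := j
  simp only [gv, Pi.zero_apply]
  split_ifs <;> first | decide | omega

lemma sol2 (M : ℕ) (hM : 0 < M) (h : M % 3 = 2) :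
    (ffdA M).mulVec (fun k : Fin M => if (k : ℕ) % 3 = 1 then 1 else 0) =
      Pi.single (⟨0, hM⟩ : Fin M) (1 : ZMod 2) := by
  funext j
  rw [ffd_mulVec]
  obtain ⟨n, hn⟩ := j
  rw [Pi.single_apply]
  have hje : ((⟨n, hn⟩ : Fin M) = ⟨0, hM⟩) ↔ n = 0 := by
    constructor
    · intro hh; exact congrArg Fin.val hh
    · intro hh; exact Fin.ext hh
  rw [if_congr hje rfl rfl]
  simp only [gv]
  split_ifs <;> first | decide | omega

lemma sol0 (M : ℕ) (hM : 0 < M) (h : M % 6 = 0) :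
    (ffdA M).mulVec
        (fun k : Fin M => if 2 ≤ (k : ℕ) % 6 ∧ (k : ℕ) % 6 ≤ 4 then 1 else 0) =
      Pi.single (⟨0, hM⟩ : Fin M) (1 : ZMod 2) := by
  funext j
  rw [ffd_mulVec]
  obtain ⟨n, hn⟩ := j
  rw [Pi.single_apply]
  have hje : ((⟨n, hn⟩ : Fin M) = ⟨0, hM⟩) ↔ n = 0 := by
    constructor
    · intro hh; exact congrArg Fin.val hh
    · intro hh; exact Fin.ext hh
  rw [if_congr hje rfl rfl]
  simp only [gv]
  split_ifs <;> first | decide | omega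

/-- for every `M ≥ 1`, the first standard basis vector `e_1 ∈ 𝔽₂^M`
lies in the column space of `A_M` over `𝔽₂` (equivalently, an edge operator
anticommuting with exactly the first boundary generator can be chosen inside the
free-fermions-in-disguise algebra) if and only if `M ≡ 0, 2, 5 (mod 6)`. -/
theorem stmt15 (M : ℕ) (hM : 0 < M) :
    (Pi.single (⟨0, hM⟩ : Fin M) (1 : ZMod 2) ∈ LinearMap.range (ffdA M).mulVecLin) ↔
      (M % 6 = 0 ∨ M % 6 = 2 ∨ M % 6 = 5) := by
  constructor
  · intro hmem
    by_contra hcon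
    push_neg at hcon
    obtain ⟨h0, h2, h5⟩ := hcon
    by_cases h3 : M % 6 = 3
    · exact no_sol M hM _ (by norm_num) (ker3 M h3) hmem
    · have h31 : M % 3 = 1 := by omega
      exact no_sol M hM _ (by norm_num) (ker1 M h31) hmem
  · intro hmod
    rcases hmod with h | h | h
    · exact ⟨_, by rw [Matrix.mulVecLin_apply]; exact sol0 M hM h⟩
    · exact ⟨_, by rw [Matrix.mulVecLin_apply]; exact sol2 M hM (by omega)⟩
    · exact ⟨_, by rw [Matrix.mulVecLin_apply]; exact sol2 M hM (by omega)⟩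

end
end

section
/- Let M = 6k+2 with k ≥ 0 and let 𝒜 be the free-fermions-in-disguise graph-Clifford algebra with M generators. The element χ = h_1 h_4 h_7 ⋯ h_{6k+1} (the ordered product over positions ≡ 1 mod 3 up to 6k+1) satisfies χ² = 1, anticommutes with exactly one generator, namely χ h_M = −h_M χ, and commutes with h_j for every j < M. Hence χ is an edge operator of the algebra for the simplicial clique consisting of the single boundary generator h_M (equivalently, by the relabeling j ↦ M+1−j, an edge operator for the clique {h_1}). -/
noncomputable section


/-- The adjacency matrix (over `ℤ`) of the frustration graph of the
free-fermions-in-disguise model with `M` generators and open boundary conditions: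
generators at distance `1` or `2` anticommute, all other pairs commute. -/
def ffdAZ (M : ℕ) : Matrix (Fin M) (Fin M) ℤ :=
  fun j k => if 1 ≤ ((j : ℤ) - (k : ℤ)).natAbs ∧ ((j : ℤ) - (k : ℤ)).natAbs ≤ 2 then 1 else 0

/-- For `M = 6k+2`, the candidate edge operator `χ = h_1 h_4 h_7 ⋯ h_{6k+1}`:
the ordered product of the generators at the (1-indexed) positions `≡ 1 (mod 3)`,
i.e. the 0-indexed positions `j` with `j % 3 = 0`. -/
def ffdChi (k : ℕ) : GC (ffdAZ (6 * k + 2)) :=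
  gS (ffdAZ (6 * k + 2)) (Finset.univ.filter (fun j : Fin (6 * k + 2) => (j : ℕ) % 3 = 0))

-- auxiliary lemmas

lemma hgen_sq {M : ℕ} (A : Matrix (Fin M) (Fin M) ℤ) (a : Fin M) :
    hgen A a * hgen A a = 1 := by
  have h := RingQuot.mkAlgHom_rel ℂ (GCRel.sq (A := A) a)
  simpa [hgen, map_mul, map_one] using h

lemma ffdAZ_diag {M : ℕ} (a : Fin M) : ffdAZ M a a = 0 := by
  simp [ffdAZ]

lemma ffdAZ_symm {M : ℕ} (a b : Fin M) : ffdAZ M a b = ffdAZ M b a := by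
  unfold ffdAZ
  rw [show ((a : ℤ) - (b : ℤ)).natAbs = ((b : ℤ) - (a : ℤ)).natAbs by omega]

lemma hgen_swap {M : ℕ} (a j : Fin M) :
    hgen (ffdAZ M) a * hgen (ffdAZ M) j =
      ((-1 : ℂ) ^ (ffdAZ M a j)) • (hgen (ffdAZ M) j * hgen (ffdAZ M) a) := by
  by_cases h : a = j
  · subst h
    rw [ffdAZ_diag]
    simp
  · have hr := RingQuot.mkAlgHom_rel ℂ (GCRel.comm (A := ffdAZ M) a j h)
    simpa [hgen, map_mul, map_smul] using hr

lemma prod_swap {M : ℕ} (l : List (Fin M)) (j : Fin M) :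
    ((l.map (hgen (ffdAZ M))).prod) * hgen (ffdAZ M) j =
      (l.map (fun a => ((-1 : ℂ) ^ (ffdAZ M a j)))).prod •
        (hgen (ffdAZ M) j * (l.map (hgen (ffdAZ M))).prod) := by
  induction l with
  | nil => simp
  | cons a t ih =>
    simp only [List.map_cons, List.prod_cons, mul_assoc, ih]
    rw [mul_smul_comm, ← mul_assoc, hgen_swap a j, smul_mul_assoc, smul_smul, mul_comm]
    simp [mul_assoc]

lemma prod_sq {M : ℕ} (l : List (Fin M))
    (hl : l.Pairwise (fun a b => ffdAZ M a b = 0)) :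
    ((l.map (hgen (ffdAZ M))).prod) * ((l.map (hgen (ffdAZ M))).prod) = 1 := by
  induction l with
  | nil => simp
  | cons a t ih =>
    rcases List.pairwise_cons.mp hl with ⟨ha, ht⟩
    have hsign : (t.map (fun b => ((-1 : ℂ) ^ (ffdAZ M b a)))).prod = 1 := by
      apply List.prod_eq_one
      intro x hx
      rcases List.mem_map.mp hx with ⟨b, hb, rfl⟩
      rw [ffdAZ_symm, ha b hb]
      norm_num
    simp only [List.map_cons, List.prod_cons]
    calc hgen (ffdAZ M) a * (t.map (hgen (ffdAZ M))).prod *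
          (hgen (ffdAZ M) a * (t.map (hgen (ffdAZ M))).prod)
        = hgen (ffdAZ M) a * ((t.map (hgen (ffdAZ M))).prod * hgen (ffdAZ M) a) *
            (t.map (hgen (ffdAZ M))).prod := by simp only [mul_assoc]
      _ = hgen (ffdAZ M) a * (hgen (ffdAZ M) a * (t.map (hgen (ffdAZ M))).prod) *
            (t.map (hgen (ffdAZ M))).prod := by rw [prod_swap, hsign, one_smul]
      _ = (hgen (ffdAZ M) a * hgen (ffdAZ M) a) *
            ((t.map (hgen (ffdAZ M))).prod * (t.map (hgen (ffdAZ M))).prod) := by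
              simp only [mul_assoc]
      _ = 1 := by rw [hgen_sq, one_mul, ih ht]

-- the explicit list of positions 0, 3, 6, ..., 6k

def chiFn (k : ℕ) (i : Fin (2 * k + 1)) : Fin (6 * k + 2) :=
  ⟨3 * (i : ℕ), by omega⟩

def chiList (k : ℕ) : List (Fin (6 * k + 2)) := List.ofFn (chiFn k)

lemma chiList_sorted (k : ℕ) : (chiList k).Pairwise (· < ·) := by
  rw [chiList, List.pairwise_ofFn]
  intro i j hij
  simp only [chiFn, Fin.mk_lt_mk]
  have := Fin.lt_iff_val_lt_val.mp hij
  omega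

lemma sort_eq_chiList (k : ℕ) :
    ((Finset.univ.filter (fun j : Fin (6 * k + 2) => (j : ℕ) % 3 = 0)).sort (· ≤ ·)) =
      chiList k := by
  apply (fun h1 h2 h3 => List.Perm.eq_of_pairwise'
    (r := (· ≤ · : Fin (6 * k + 2) → Fin (6 * k + 2) → Prop)) h2 h3 h1)
  · apply List.perm_of_nodup_nodup_toFinset_eq
    · exact Finset.sort_nodup _ _
    · exact (chiList_sorted k).nodup
    · rw [Finset.sort_toFinset]
      ext x
      simp only [chiList, List.mem_toFinset, List.mem_ofFn, Set.mem_range,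
        Finset.mem_filter, Finset.mem_univ, true_and]
      constructor
      · intro hx
        have hlt := x.isLt
        refine ⟨⟨(x : ℕ) / 3, by omega⟩, ?_⟩
        apply Fin.ext
        simp only [chiFn, Fin.val_mk]
        omega
      · rintro ⟨i, rfl⟩
        simp only [chiFn, Fin.val_mk]
        omega
  · exact Finset.pairwise_sort _ _
  · exact (chiList_sorted k).imp le_of_lt

lemma ffdChi_eq (k : ℕ) :
    ffdChi k = ((chiList k).map (hgen (ffdAZ (6 * k + 2)))).prod := by
  rw [ffdChi, gS, sort_eq_chiList]

lemma chi_swap (k : ℕ) (j : Fin (6 * k + 2)) :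
    ffdChi k * hgen (ffdAZ (6 * k + 2)) j =
      (∏ i : Fin (2 * k + 1),
          ((-1 : ℂ) ^ (ffdAZ (6 * k + 2) (chiFn k i) j))) •
        (hgen (ffdAZ (6 * k + 2)) j * ffdChi k) := by
  rw [ffdChi_eq, prod_swap]
  congr 1
  rw [chiList, List.map_ofFn, List.prod_ofFn]
  rfl

lemma ffdAZ_eval {M : ℕ} (a b : Fin M)
    (h : ¬ (1 ≤ ((a:ℤ) - (b:ℤ)).natAbs ∧ ((a:ℤ) - (b:ℤ)).natAbs ≤ 2)) :
    ((-1 : ℂ) ^ (ffdAZ M a b)) = 1 := by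
  rw [ffdAZ]; simp [h]

lemma ffdAZ_eval' {M : ℕ} (a b : Fin M)
    (h : 1 ≤ ((a:ℤ) - (b:ℤ)).natAbs ∧ ((a:ℤ) - (b:ℤ)).natAbs ≤ 2) :
    ((-1 : ℂ) ^ (ffdAZ M a b)) = -1 := by
  rw [ffdAZ]; simp [h]

/-- for `M = 6k+2`, the element `χ = h_1 h_4 ⋯ h_{6k+1}` of the
free-fermions-in-disguise graph-Clifford algebra squares to one, anticommutes with the
last generator `h_M` (0-indexed `6k+1`), and commutes with every generator `h_j` with
`j < M`; hence it is an edge operator for the simplicial clique `{h_M}`. -/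
theorem stmt16 (k : ℕ) :
    ffdChi k * ffdChi k = 1 ∧
    ffdChi k * hgen (ffdAZ (6 * k + 2)) ⟨6 * k + 1, by omega⟩ =
      -(hgen (ffdAZ (6 * k + 2)) ⟨6 * k + 1, by omega⟩ * ffdChi k) ∧
    (∀ j : Fin (6 * k + 2), (j : ℕ) < 6 * k + 1 →
      ffdChi k * hgen (ffdAZ (6 * k + 2)) j = hgen (ffdAZ (6 * k + 2)) j * ffdChi k) := by
  refine ⟨?_, ?_, ?_⟩
  · rw [ffdChi_eq]
    apply prod_sq
    rw [chiList, List.pairwise_ofFn]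
    intro i j hij
    have := Fin.lt_iff_val_lt_val.mp hij
    rw [ffdAZ]
    simp only [chiFn, Fin.val_mk, ite_eq_right_iff]
    omega
  · rw [chi_swap]
    rw [Finset.prod_eq_single_of_mem (⟨2 * k, by omega⟩ : Fin (2 * k + 1))
      (Finset.mem_univ _)]
    · rw [ffdAZ_eval' _ _ (by simp only [chiFn, Fin.val_mk]; omega)]
      set x := hgen (ffdAZ (6*k+2)) ⟨6*k+1, by omega⟩ * ffdChi k
      show (-1 : ℂ) • x = -x
      rw [Algebra.smul_def, map_neg, map_one]
      exact neg_one_mul x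
    · intro b _ hbne
      apply ffdAZ_eval
      have hb : (b : ℕ) ≠ 2 * k := fun h => hbne (Fin.ext h)
      have := b.isLt
      simp only [chiFn, Fin.val_mk]
      omega
  · intro j hj
    rw [chi_swap]
    have h3 : (j : ℕ) % 3 = 0 ∨ (j : ℕ) % 3 = 1 ∨ (j : ℕ) % 3 = 2 := by omega
    have hprod : (∏ i : Fin (2 * k + 1),
        ((-1 : ℂ) ^ (ffdAZ (6 * k + 2) (chiFn k i) j))) = 1 := by
      rcases h3 with h0 | h1 | h1
      · apply Finset.prod_eq_one
        intro i _
        apply ffdAZ_eval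
        have := i.isLt
        simp only [chiFn, Fin.val_mk]
        omega
      all_goals {
        have hmk : (j : ℕ) / 3 + 1 ≤ 2 * k := by omega
        set m : ℕ := (j : ℕ) / 3 with hm
        have hsub : ({⟨m, by omega⟩, ⟨m + 1, by omega⟩} : Finset (Fin (2 * k + 1)))
            ⊆ Finset.univ := Finset.subset_univ _
        rw [← Finset.prod_sdiff hsub]
        rw [Finset.prod_pair (by simp only [ne_eq, Fin.mk.injEq]; omega)]
        rw [ffdAZ_eval' _ _ (by simp only [chiFn, Fin.val_mk]; omega),
            ffdAZ_eval' _ _ (by simp only [chiFn, Fin.val_mk]; omega)]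
        rw [Finset.prod_eq_one]
        · norm_num
        · intro i hi
          simp only [Finset.mem_sdiff, Finset.mem_univ, Finset.mem_insert,
            Finset.mem_singleton, true_and, not_or] at hi
          apply ffdAZ_eval
          have h1 : (i : ℕ) ≠ m := fun h => hi.1 (Fin.ext h)
          have h2 : (i : ℕ) ≠ m + 1 := fun h => hi.2 (Fin.ext h)
          have := i.isLt
          simp only [chiFn, Fin.val_mk]
          omega }
    rw [hprod, one_smul]

end
end
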